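/- arXiv:math/0606546 — 2 statements merged into one kernel-verified Lean document; each statement's English description precedes it below -/
import Mathlib

section
/- Let n = p₁^{n₁}⋯p_K^{n_K} and let σ be a permutation of Z_n such that for every j with 1 ≤ j ≤ K and every x ∈ Z_n, the image σ(x + Z_{p_j}) is a coset of Z_{p_j} (where Z_{p_j} denotes the unique subgroup of Z_n of order p_j). Then for every E ⊆ Z_n, E is quasi-independent (as a subset of the n-th roots of unity in ℂ) if and only if σ(E) is quasi-independent; likewise E is independent if and only if σ(E) is independent. -/
set_option linter.unusedSectionVars false
set_option maxHeartbeats 1600000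

def QuasiIndep (S : Set ℂ) : Prop :=
  ∀ (s : Finset ℂ) (ε : ℂ → ℤ), ↑s ⊆ S →
    (∀ z ∈ s, ε z = 0 ∨ ε z = 1 ∨ ε z = -1) →
    (∑ z ∈ s, (ε z : ℂ) * z) = 0 → ∀ z ∈ s, ε z = 0

def Indep (S : Set ℂ) : Prop :=
  ∀ (s : Finset ℂ) (ε : ℂ → ℚ), ↑s ⊆ S →
    (∑ z ∈ s, (ε z : ℂ) * z) = 0 → ∀ z ∈ s, ε z = 0

noncomputable def zeta (n : ℕ) (k : ZMod n) : ℂ :=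
  Complex.exp (2 * Real.pi * Complex.I * k.val / n)

namespace Stmt10Aux
open Polynomial Finset AddMonoidAlgebra

noncomputable def zc (n : ℕ) : ℂ := Complex.exp (2 * Real.pi * Complex.I / n)

variable {n : ℕ} [NeZero n]

lemma hzc : IsPrimitiveRoot (zc n) n := Complex.isPrimitiveRoot_exp n (NeZero.ne n)

lemma zeta_eq (k : ZMod n) : zeta n k = zc n ^ k.val := by
  rw [zc, ← Complex.exp_nat_mul, zeta]
  ring_nf

lemma zc_pow_mod (m : ℕ) : zc n ^ (m % n) = zc n ^ m := by
  conv_rhs => rw [← Nat.div_add_mod m n]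
  rw [pow_add, pow_mul, hzc.pow_eq_one, one_pow, one_mul]

lemma zeta_inj : Function.Injective (zeta n) := by
  intro a b h
  rw [zeta_eq, zeta_eq] at h
  have := hzc.pow_inj (ZMod.val_lt a) (ZMod.val_lt b) h
  exact ZMod.val_injective n this

noncomputable def psiHom (n : ℕ) [NeZero n] : Multiplicative (ZMod n) →* ℂ where
  toFun k := zc n ^ (Multiplicative.toAdd k).val
  map_one' := by simp [ZMod.val_zero]
  map_mul' a b := by
    show zc n ^ (Multiplicative.toAdd a + Multiplicative.toAdd b).val = _
    rw [ZMod.val_add, zc_pow_mod, pow_add]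

noncomputable def psi (n : ℕ) [NeZero n] : AddMonoidAlgebra ℚ (ZMod n) →ₐ[ℚ] ℂ :=
  AddMonoidAlgebra.lift ℚ ℂ (ZMod n) (psiHom n)

lemma psi_single (a : ZMod n) (b : ℚ) :
    psi n (AddMonoidAlgebra.single a b) = b • zc n ^ a.val :=
  AddMonoidAlgebra.lift_single _ _ _

noncomputable def FF (n p : ℕ) : ℚ[X] := ∑ j ∈ Finset.range p, (X : ℚ[X]) ^ (n / p * j)

lemma FF_mul {p : ℕ} (hp : p ∣ n) : FF n p * ((X : ℚ[X]) ^ (n / p) - 1) = X ^ n - 1 := by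
  have h := geom_sum_mul ((X : ℚ[X]) ^ (n / p)) p
  rw [FF]
  simp_rw [pow_mul]
  rw [h, ← pow_mul, Nat.div_mul_cancel hp]

lemma ndivp_pos {p : ℕ} (hp : p.Prime) (hpn : p ∣ n) : 0 < n / p :=
  Nat.div_pos (Nat.le_of_dvd (Nat.pos_of_ne_zero (NeZero.ne n)) hpn) hp.pos

lemma ndivp_lt {p : ℕ} (hp : p.Prime) : n / p < n :=
  Nat.div_lt_self (Nat.pos_of_ne_zero (NeZero.ne n)) hp.one_lt

lemma cyclotomic_dvd_FF {p : ℕ} (hp : p.Prime) (hpn : p ∣ n) :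
    cyclotomic n ℚ ∣ FF n p := by
  have hnpos : 0 < n := Nat.pos_of_ne_zero (NeZero.ne n)
  have h1 : cyclotomic n ℚ ∣ FF n p * ((X : ℚ[X]) ^ (n / p) - 1) := by
    rw [FF_mul hpn]; exact cyclotomic.dvd_X_pow_sub_one n ℚ
  have hprime : Prime (cyclotomic n ℚ) :=
    (irreducible_iff_prime).mp (cyclotomic.irreducible_rat hnpos)
  rcases hprime.dvd_or_dvd h1 with h | h
  · exact h
  · exfalso
    have hroot : (Polynomial.aeval (zc n)) ((X : ℚ[X]) ^ (n / p) - 1) = 0 := by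
      obtain ⟨t, ht⟩ := h
      have : (Polynomial.aeval (zc n)) (cyclotomic n ℚ) = 0 := by
        rw [aeval_def, ← eval_map, map_cyclotomic]
        exact (hzc.isRoot_cyclotomic hnpos)
      rw [ht, map_mul, this, zero_mul]
    simp only [map_sub, map_pow, aeval_X, map_one, sub_eq_zero] at hroot
    exact hzc.pow_ne_one_of_pos_of_lt (ndivp_pos hp hpn).ne' (ndivp_lt hp) hroot

lemma aeval_FF_of_pow_eq_one {p : ℕ} (z : ℂ) (hz : z ^ (n / p) = 1) :
    (Polynomial.aeval z) (FF n p) = p := by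
  rw [FF]
  simp_rw [map_sum, map_pow, aeval_X, pow_mul, hz, one_pow]
  simp

lemma bez (hn : 2 ≤ n) : ∃ c : {p : ℕ // p ∈ n.primeFactors} → ℚ[X],
    ∑ i, c i * FF n i = cyclotomic n ℚ := by
  have hnpos : 0 < n := by omega
  have hne : n ≠ 0 := by omega
  have hXn : ((X : ℚ[X]) ^ n - 1) ≠ 0 := by
    have := X_pow_sub_C_ne_zero hnpos (1 : ℚ)
    simpa using this
  have hmem : ∀ i : {p : ℕ // p ∈ n.primeFactors}, (i : ℕ).Prime ∧ (i : ℕ) ∣ n := by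
    intro i; exact ⟨Nat.prime_of_mem_primeFactors i.2, Nat.dvd_of_mem_primeFactors i.2⟩
  choose G hG using fun i : {p : ℕ // p ∈ n.primeFactors} =>
    cyclotomic_dvd_FF (n := n) (hmem i).1 (hmem i).2
  obtain ⟨p₀, hp₀⟩ := (Nat.nonempty_primeFactors).mpr (by omega : 1 < n)
  let i₀ : {p : ℕ // p ∈ n.primeFactors} := ⟨p₀, hp₀⟩
  have hFFne : ∀ i : {p : ℕ // p ∈ n.primeFactors}, FF n i ≠ 0 := by
    intro i h
    rw [← FF_mul (n := n) (hmem i).2, h, zero_mul] at hXn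
    exact hXn rfl
  have hJ : Ideal.span (Set.range G) = ⊤ := by
    by_contra hJ
    obtain ⟨M, hM, hle⟩ := Ideal.exists_le_maximal _ hJ
    obtain ⟨q, hq⟩ : M.IsPrincipal := IsPrincipalIdealRing.principal M
    have hGmem : ∀ i, q ∣ G i := by
      intro i
      have : G i ∈ M := hle (Ideal.subset_span (Set.mem_range_self i))
      rw [hq] at this
      exact Ideal.mem_span_singleton.mp this
    have hq0 : q ≠ 0 := by
      rintro rfl
      have h0 : G i₀ = 0 := by simpa using hGmem i₀
      exact hFFne i₀ (by rw [hG i₀, h0, mul_zero])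
    have hqprime : Prime q := by
      have := hM.isPrime
      rw [hq] at this
      exact (Ideal.span_singleton_prime hq0).mp this
    -- find complex root of q
    have hdeg : 0 < (q.map (algebraMap ℚ ℂ)).degree := by
      rw [degree_map]
      exact degree_pos_of_ne_zero_of_nonunit hq0 hqprime.not_unit
    obtain ⟨z, hzroot⟩ := Complex.exists_root hdeg
    have hz : (Polynomial.aeval z) q = 0 := by
      rwa [aeval_def, ← eval_map]
    have hFF0 : ∀ i : {p : ℕ // p ∈ n.primeFactors}, (Polynomial.aeval z) (FF n i) = 0 := by
      intro i
      obtain ⟨t, ht⟩ := hGmem i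
      rw [hG i, ht, map_mul, map_mul, hz]; ring
    have hzn : z ^ n = 1 := by
      have := congrArg (Polynomial.aeval z) (FF_mul (n := n) (hmem i₀).2)
      rw [map_mul, hFF0 i₀, zero_mul] at this
      have h2 : (Polynomial.aeval z) ((X : ℚ[X]) ^ n - 1) = z ^ n - 1 := by simp
      rw [h2] at this
      linear_combination -this
    have hprim : IsPrimitiveRoot z n := by
      have horder : orderOf z = n := by
        have hdvd : orderOf z ∣ n := orderOf_dvd_of_pow_eq_one hzn
        by_contra hne'
        set d := orderOf z with hd
        have hd0 : d ≠ 0 := by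
          intro h0
          rw [h0] at hdvd
          exact hne (Nat.eq_zero_of_zero_dvd hdvd)
        obtain ⟨t, ht⟩ := hdvd
        have ht1 : t ≠ 1 := by rintro rfl; rw [mul_one] at ht; exact hne' ht.symm
        have ht0 : t ≠ 0 := by rintro rfl; rw [mul_zero] at ht; exact hne ht
        set p := t.minFac with hp
        have hpprime : p.Prime := Nat.minFac_prime ht1
        have hpt : p ∣ t := Nat.minFac_dvd t
        have hpn : p ∣ n := ht ▸ hpt.mul_left d
        have hdnp : d ∣ n / p := by
          obtain ⟨s, hs⟩ := hpt
          refine ⟨s, ?_⟩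
          rw [ht, hs, show d * (p * s) = p * (d * s) by ring]
          exact Nat.mul_div_cancel_left _ hpprime.pos
        have hznp : z ^ (n / p) = 1 := orderOf_dvd_iff_pow_eq_one.mp (hd ▸ hdnp)
        have : (Polynomial.aeval z) (FF n p) = p := aeval_FF_of_pow_eq_one z hznp
        have hmemp : p ∈ n.primeFactors := Nat.mem_primeFactors.mpr ⟨hpprime, hpn, hne⟩
        rw [hFF0 ⟨p, hmemp⟩] at this
        exact_mod_cast hpprime.ne_zero (by exact_mod_cast this.symm)
      rw [← horder]
      exact IsPrimitiveRoot.orderOf z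
    have hcyc : cyclotomic n ℚ = minpoly ℚ z := cyclotomic_eq_minpoly_rat hprim hnpos
    have hcq : cyclotomic n ℚ ∣ q := hcyc ▸ minpoly.dvd ℚ z hz
    have hsq : Squarefree ((X : ℚ[X]) ^ n - 1) := by
      have := (separable_X_pow_sub_C (1 : ℚ) (by exact_mod_cast hne) one_ne_zero).squarefree
      simpa using this
    have hΦΦ : cyclotomic n ℚ * cyclotomic n ℚ ∣ (X : ℚ[X]) ^ n - 1 := by
      have h1 : cyclotomic n ℚ ∣ G i₀ := hcq.trans (hGmem i₀)
      obtain ⟨t, ht⟩ := h1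
      refine Dvd.dvd.trans ⟨t, ?_⟩ (Dvd.intro _ (FF_mul (n := n) (hmem i₀).2))
      rw [hG i₀, ht]; ring
    exact (cyclotomic.irreducible_rat hnpos).not_isUnit (hsq _ hΦΦ)
  have h1 : (1 : ℚ[X]) ∈ Ideal.span (Set.range G) := hJ ▸ Submodule.mem_top
  obtain ⟨c, hc⟩ := Ideal.mem_span_range_iff_exists_fun.mp h1
  refine ⟨fun i => c i, ?_⟩
  calc ∑ i, c i * FF n i = cyclotomic n ℚ * ∑ i, c i * G i := by
        rw [Finset.mul_sum]; congr 1; ext i; rw [hG i]; ring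
    _ = cyclotomic n ℚ := by rw [hc, mul_one]

/-- the "cyclic subgroup sum" element. -/
noncomputable def cp (n p : ℕ) : AddMonoidAlgebra ℚ (ZMod n) :=
  ∑ j ∈ Finset.range p, AddMonoidAlgebra.single ((n / p * j : ℕ) : ZMod n) (1 : ℚ)

def gens (n : ℕ) : Set (AddMonoidAlgebra ℚ (ZMod n)) :=
  {a | ∃ p ∈ n.primeFactors, ∃ x : ZMod n, a = AddMonoidAlgebra.single x 1 * cp n p}

noncomputable def T (n : ℕ) : Submodule ℚ (AddMonoidAlgebra ℚ (ZMod n)) :=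
  Submodule.span ℚ (gens n)

lemma ndivp_pos' {p : ℕ} (hp : p.Prime) (hpn : p ∣ n) : 0 < n / p :=
  Nat.div_pos (Nat.le_of_dvd (Nat.pos_of_ne_zero (NeZero.ne n)) hpn) hp.pos

lemma psi_cp {p : ℕ} (hp : p.Prime) (hpn : p ∣ n) : psi n (cp n p) = 0 := by
  have hnpos : 0 < n := Nat.pos_of_ne_zero (NeZero.ne n)
  rw [cp, map_sum]
  have hterm : ∀ j, psi n (AddMonoidAlgebra.single ((n / p * j : ℕ) : ZMod n) (1 : ℚ)) =
      (zc n ^ (n / p)) ^ j := by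
    intro j
    rw [psi_single, one_smul, ZMod.val_natCast, zc_pow_mod, pow_mul]
  simp_rw [hterm]
  have hne1 : zc n ^ (n / p) ≠ 1 :=
    hzc.pow_ne_one_of_pos_of_lt (ndivp_pos' hp hpn).ne'
      (Nat.div_lt_self hnpos hp.one_lt)
  rw [geom_sum_eq hne1, ← pow_mul, Nat.div_mul_cancel hpn, hzc.pow_eq_one]
  simp

lemma psi_gen {p : ℕ} (hp : p.Prime) (hpn : p ∣ n) (x : ZMod n) :
    psi n (AddMonoidAlgebra.single x 1 * cp n p) = 0 := by
  rw [map_mul, psi_cp hp hpn, mul_zero]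

lemma T_le_ker : T n ≤ LinearMap.ker (psi n).toLinearMap := by
  rw [T, Submodule.span_le]
  rintro a ⟨p, hp, x, rfl⟩
  have := Nat.prime_of_mem_primeFactors hp
  simp only [SetLike.mem_coe, LinearMap.mem_ker, AlgHom.toLinearMap_apply]
  exact psi_gen this (Nat.dvd_of_mem_primeFactors hp) x

lemma mul_cp_mem {p : ℕ} (hp : p ∈ n.primeFactors) (a : AddMonoidAlgebra ℚ (ZMod n)) :
    a * cp n p ∈ T n := by
  have hrep : a = ∑ x ∈ a.coeff.support, AddMonoidAlgebra.single x (a.coeff x) := by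
    conv_lhs => rw [← AddMonoidAlgebra.sum_coeff_single a]
    rfl
  nth_rewrite 1 [hrep]
  rw [Finset.sum_mul]
  apply Submodule.sum_mem
  intro x _
  have h1 : (AddMonoidAlgebra.single x (a.coeff x)) * cp n p
      = (a.coeff x) • (AddMonoidAlgebra.single x 1 * cp n p) := by
    rw [← smul_mul_assoc, AddMonoidAlgebra.smul_single', mul_one]
  rw [h1]
  exact (T n).smul_mem _ (Submodule.subset_span ⟨p, hp, x, rfl⟩)

noncomputable def phi (n : ℕ) : ℚ[X] →ₐ[ℚ] AddMonoidAlgebra ℚ (ZMod n) :=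
  Polynomial.aeval (AddMonoidAlgebra.single (1 : ZMod n) (1 : ℚ))

lemma phi_X_pow (m : ℕ) : phi n ((X : ℚ[X]) ^ m) = AddMonoidAlgebra.single ((m : ZMod n)) 1 := by
  rw [phi, map_pow, aeval_X, AddMonoidAlgebra.single_pow, one_pow]
  congr 1
  rw [nsmul_eq_mul, mul_one]

lemma phi_FF (p : ℕ) : phi n (FF n p) = cp n p := by
  rw [FF, map_sum, cp]
  exact Finset.sum_congr rfl fun j _ => phi_X_pow _

/-- the finsupp associated to a function on `ZMod n`. -/
noncomputable def Gg (n : ℕ) [NeZero n] (g : ZMod n → ℚ) : AddMonoidAlgebra ℚ (ZMod n) :=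
  ∑ k : ZMod n, AddMonoidAlgebra.single k (g k)

lemma phi_Pg (g : ZMod n → ℚ) :
    phi n (∑ k : ZMod n, Polynomial.C (g k) * (X : ℚ[X]) ^ (k.val)) = Gg n g := by
  rw [map_sum, Gg]
  refine Finset.sum_congr rfl fun k _ => ?_
  rw [map_mul, phi_X_pow, phi, ← Polynomial.algebraMap_eq, AlgHom.commutes]
  simp [AddMonoidAlgebra.coe_algebraMap, AddMonoidAlgebra.single_mul_single,
    ZMod.natCast_val, ZMod.cast_id]

lemma psi_Gg (g : ZMod n → ℚ) :
    psi n (Gg n g) = ∑ k : ZMod n, (g k : ℂ) * zc n ^ k.val := by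
  rw [Gg, map_sum]
  refine Finset.sum_congr rfl fun k _ => ?_
  rw [psi_single, Rat.smul_def]

lemma pd_zero {p : ℕ} (hpn : p ∣ n) : (p : ZMod n) * ((n / p : ℕ) : ZMod n) = 0 := by
  rw [← Nat.cast_mul, Nat.mul_div_cancel' hpn, ZMod.natCast_self]

lemma ZM {p : ℕ} (hp : p.Prime) (hpn : p ∣ n) :
    (fun j : ℕ => ((n / p : ℕ) : ZMod n) * (j : ZMod n)) '' Set.Iio p
      = ↑(AddSubgroup.zmultiples (((n / p : ℕ) : ZMod n))) := by
  set δ : ZMod n := ((n / p : ℕ) : ZMod n) with hδ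
  have hpδ : (p : ℤ) • δ = 0 := by
    rw [zsmul_eq_mul, Int.cast_natCast, pd_zero hpn]
  ext z
  simp only [Set.mem_image, Set.mem_Iio, SetLike.mem_coe, AddSubgroup.mem_zmultiples_iff]
  constructor
  · rintro ⟨j, hj, rfl⟩
    exact ⟨(j : ℤ), by rw [zsmul_eq_mul, Int.cast_natCast, mul_comm]⟩
  · rintro ⟨k, rfl⟩
    have hppos : (0 : ℤ) < p := by exact_mod_cast hp.pos
    refine ⟨(k % p).toNat, ?_, ?_⟩
    · have h1 : 0 ≤ k % p := Int.emod_nonneg k (by positivity)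
      have h2 : k % p < p := Int.emod_lt_of_pos k hppos
      omega
    · have hsplit : k • δ = (k % p) • δ := by
        conv_lhs => rw [← Int.mul_ediv_add_emod k p]
        rw [add_zsmul, mul_comm, mul_zsmul, hpδ, smul_zero, zero_add]
      show ((n / p : ℕ) : ZMod n) * (((k % (p : ℤ)).toNat : ℕ) : ZMod n) = k • δ
      rw [hsplit]
      conv_rhs => rw [← Int.toNat_of_nonneg (Int.emod_nonneg k (by positivity))]
      rw [natCast_zsmul, nsmul_eq_mul, mul_comm]

lemma key_inj {p : ℕ} (hp : p.Prime) (hpn : p ∣ n) :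
    ∀ j ∈ range p, ∀ j' ∈ range p,
      ((n / p : ℕ) : ZMod n) * (j : ZMod n) = ((n / p : ℕ) : ZMod n) * (j' : ZMod n) → j = j' := by
  intro j hj j' hj' h
  rw [mem_range] at hj hj'
  have hcast : ((n / p * j : ℕ) : ZMod n) = ((n / p * j' : ℕ) : ZMod n) := by push_cast; exact h
  rw [ZMod.natCast_eq_natCast_iff] at hcast
  have hlt : ∀ m, m < p → n / p * m < n := by
    intro m hm
    calc n / p * m < n / p * p := by
          have := ndivp_pos' (n := n) hp hpn
          exact (Nat.mul_lt_mul_left this).mpr hm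
      _ = n := Nat.div_mul_cancel hpn
  have heq : n / p * j % n = n / p * j' % n := hcast
  rw [Nat.mod_eq_of_lt (hlt j hj), Nat.mod_eq_of_lt (hlt j' hj')] at heq
  exact Nat.eq_of_mul_eq_mul_left (ndivp_pos' hp hpn) heq


lemma mapDomain_gen {p : ℕ} (hpp : p ∈ n.primeFactors) (σ : Equiv.Perm (ZMod n))
    (hσp : ∀ x : ZMod n, ∃ y : ZMod n,
      σ '' ((x + ·) '' ↑(AddSubgroup.zmultiples (((n / p : ℕ) : ZMod n)))) =
        (y + ·) '' ↑(AddSubgroup.zmultiples (((n / p : ℕ) : ZMod n))))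
    (x : ZMod n) : ∃ y : ZMod n,
      AddMonoidAlgebra.mapDomain (⇑σ) (AddMonoidAlgebra.single x 1 * cp n p)
        = AddMonoidAlgebra.single y 1 * cp n p := by
  have hp : p.Prime := Nat.prime_of_mem_primeFactors hpp
  have hpn : p ∣ n := Nat.dvd_of_mem_primeFactors hpp
  obtain ⟨y, hy⟩ := hσp x
  refine ⟨y, ?_⟩
  have hgen : ∀ w : ZMod n, AddMonoidAlgebra.single w (1 : ℚ) * cp n p =
      ∑ j ∈ Finset.range p, AddMonoidAlgebra.single (w + ((n / p : ℕ) : ZMod n) * (j : ZMod n)) 1 := by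
    intro w
    rw [cp, Finset.mul_sum]
    refine Finset.sum_congr rfl fun j _ => ?_
    rw [AddMonoidAlgebra.single_mul_single, mul_one]
    congr 1
    push_cast
    ring
  rw [hgen x, hgen y]
  rw [show AddMonoidAlgebra.mapDomain (⇑σ)
      (∑ j ∈ Finset.range p, AddMonoidAlgebra.single (x + ((n / p : ℕ) : ZMod n) * (j : ZMod n)) (1 : ℚ))
    = ∑ j ∈ Finset.range p, AddMonoidAlgebra.mapDomain (⇑σ)
        (AddMonoidAlgebra.single (x + ((n / p : ℕ) : ZMod n) * (j : ZMod n)) (1 : ℚ)) from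
    map_sum (AddMonoidAlgebra.mapDomainLinearMap ℚ ℚ (⇑σ)) _ _]
  simp_rw [AddMonoidAlgebra.mapDomain_single]
  have hinj1 : ∀ j ∈ Finset.range p, ∀ j' ∈ Finset.range p,
      σ (x + ((n / p : ℕ) : ZMod n) * (j : ZMod n)) = σ (x + ((n / p : ℕ) : ZMod n) * (j' : ZMod n)) → j = j' := by
    intro j hj j' hj' h
    exact key_inj hp hpn j hj j' hj' (by have := σ.injective h; exact add_left_cancel this)
  have hinj2 : ∀ j ∈ Finset.range p, ∀ j' ∈ Finset.range p,
      y + ((n / p : ℕ) : ZMod n) * (j : ZMod n) = y + ((n / p : ℕ) : ZMod n) * (j' : ZMod n) → j = j' := by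
    intro j hj j' hj' h
    exact key_inj hp hpn j hj j' hj' (add_left_cancel h)
  classical
  have h1 : ∑ z ∈ (Finset.range p).image (fun j : ℕ => σ (x + ((n / p : ℕ) : ZMod n) * (j : ZMod n))),
      (AddMonoidAlgebra.single z (1:ℚ)) = ∑ j ∈ Finset.range p,
      AddMonoidAlgebra.single (σ (x + ((n / p : ℕ) : ZMod n) * (j : ZMod n))) (1:ℚ) :=
    Finset.sum_image hinj1
  have h2 : ∑ z ∈ (Finset.range p).image (fun j : ℕ => y + ((n / p : ℕ) : ZMod n) * (j : ZMod n)),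
      (AddMonoidAlgebra.single z (1:ℚ)) = ∑ j ∈ Finset.range p,
      AddMonoidAlgebra.single (y + ((n / p : ℕ) : ZMod n) * (j : ZMod n)) (1:ℚ) :=
    Finset.sum_image hinj2
  rw [← h1, ← h2]
  congr 1
  apply Finset.coe_injective
  rw [Finset.coe_image, Finset.coe_image, Finset.coe_range]
  calc (fun j : ℕ => σ (x + ((n / p : ℕ) : ZMod n) * (j : ZMod n))) '' Set.Iio p
      = σ '' ((fun z => x + z) '' ((fun j : ℕ => ((n / p : ℕ) : ZMod n) * (j : ZMod n)) '' Set.Iio p)) := by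
        rw [Set.image_image, Set.image_image]
    _ = σ '' ((x + ·) '' ↑(AddSubgroup.zmultiples (((n / p : ℕ) : ZMod n)))) := by rw [ZM hp hpn]
    _ = (y + ·) '' ↑(AddSubgroup.zmultiples (((n / p : ℕ) : ZMod n))) := hy
    _ = (fun j : ℕ => y + ((n / p : ℕ) : ZMod n) * (j : ZMod n)) '' Set.Iio p := by
        rw [← ZM hp hpn, Set.image_image]

lemma T_map (σ : Equiv.Perm (ZMod n))
    (hσ : ∀ p : ℕ, p.Prime → p ∣ n → ∀ x : ZMod n, ∃ y : ZMod n,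
      σ '' ((x + ·) '' ↑(AddSubgroup.zmultiples (((n / p : ℕ) : ZMod n)))) =
        (y + ·) '' ↑(AddSubgroup.zmultiples (((n / p : ℕ) : ZMod n))))
    {a : AddMonoidAlgebra ℚ (ZMod n)} (ha : a ∈ T n) :
    AddMonoidAlgebra.mapDomain (⇑σ) a ∈ T n := by
  have hle : Submodule.map (AddMonoidAlgebra.mapDomainLinearMap ℚ ℚ (⇑σ)) (T n) ≤ T n := by
    rw [T, Submodule.map_span, Submodule.span_le]
    rintro b ⟨b', ⟨q, hq, x, rfl⟩, rfl⟩
    have hgen := mapDomain_gen hq σ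
      (hσ q (Nat.prime_of_mem_primeFactors hq) (Nat.dvd_of_mem_primeFactors hq))
    obtain ⟨y, hy⟩ := hgen x
    simp only [SetLike.mem_coe]
    show AddMonoidAlgebra.mapDomain (⇑σ) (AddMonoidAlgebra.single x 1 * cp n q) ∈ T n
    rw [hy]
    exact Submodule.subset_span ⟨q, hq, y, rfl⟩
  exact hle ⟨a, ha, rfl⟩

lemma mapDomain_Gg (σ : Equiv.Perm (ZMod n)) (g : ZMod n → ℚ) :
    AddMonoidAlgebra.mapDomain (⇑σ) (Gg n g) = Gg n (g ∘ ⇑σ.symm) := by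
  rw [Gg, show AddMonoidAlgebra.mapDomain (⇑σ) (∑ k : ZMod n, AddMonoidAlgebra.single k (g k))
      = ∑ k : ZMod n, AddMonoidAlgebra.mapDomain (⇑σ) (AddMonoidAlgebra.single k (g k)) from
    map_sum (AddMonoidAlgebra.mapDomainLinearMap ℚ ℚ (⇑σ)) _ _]
  simp_rw [AddMonoidAlgebra.mapDomain_single]
  rw [Gg]
  apply Fintype.sum_equiv σ
  intro k
  simp

lemma Gg_mem_T (hn : 2 ≤ n) (g : ZMod n → ℚ)
    (hrel : ∑ k : ZMod n, (g k : ℂ) * zc n ^ k.val = 0) : Gg n g ∈ T n := by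
  have hnpos : 0 < n := by omega
  set P : ℚ[X] := ∑ k : ZMod n, Polynomial.C (g k) * (X : ℚ[X]) ^ k.val with hP
  have haev : Polynomial.aeval (zc n) P = 0 := by
    rw [hP, map_sum]
    have hterm : ∀ k : ZMod n, Polynomial.aeval (zc n) (Polynomial.C (g k) * (X : ℚ[X]) ^ k.val)
        = (g k : ℂ) * zc n ^ k.val := by
      intro k
      rw [map_mul, map_pow, Polynomial.aeval_X, Polynomial.aeval_C, eq_ratCast]
    simp_rw [hterm]
    exact hrel
  have hdvd : Polynomial.cyclotomic n ℚ ∣ P := by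
    rw [cyclotomic_eq_minpoly_rat hzc hnpos]
    exact minpoly.dvd ℚ _ haev
  obtain ⟨Q, hQ⟩ := hdvd
  obtain ⟨c, hc⟩ := bez hn
  have hPsum : P = ∑ i : {q : ℕ // q ∈ n.primeFactors}, (Q * c i) * FF n i := by
    rw [hQ, ← hc, Finset.sum_mul]
    exact Finset.sum_congr rfl fun i _ => by ring
  have hphi := congrArg (phi n) hPsum
  rw [hP] at hphi
  rw [phi_Pg] at hphi
  rw [hphi, map_sum]
  apply Submodule.sum_mem
  intro i _
  rw [map_mul, phi_FF]
  exact mul_cp_mem i.2 _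

lemma main_rel (hn : 2 ≤ n) (σ : Equiv.Perm (ZMod n))
    (hσ : ∀ p : ℕ, p.Prime → p ∣ n → ∀ x : ZMod n, ∃ y : ZMod n,
      σ '' ((x + ·) '' ↑(AddSubgroup.zmultiples (((n / p : ℕ) : ZMod n)))) =
        (y + ·) '' ↑(AddSubgroup.zmultiples (((n / p : ℕ) : ZMod n))))
    (g : ZMod n → ℚ)
    (hrel : ∑ k : ZMod n, (g k : ℂ) * zc n ^ k.val = 0) :
    ∑ k : ZMod n, (g (σ.symm k) : ℂ) * zc n ^ k.val = 0 := by
  have h1 : Gg n g ∈ T n := Gg_mem_T hn g hrel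
  have h2 : Gg n (g ∘ ⇑σ.symm) ∈ T n := by
    rw [← mapDomain_Gg]
    exact T_map σ hσ h1
  have h3 := T_le_ker h2
  simp only [LinearMap.mem_ker, AlgHom.toLinearMap_apply] at h3
  rw [psi_Gg] at h3
  exact h3

lemma hsigma_symm (σ : Equiv.Perm (ZMod n))
    (hσ : ∀ p : ℕ, p.Prime → p ∣ n → ∀ x : ZMod n, ∃ y : ZMod n,
      ⇑σ '' ((x + ·) '' ↑(AddSubgroup.zmultiples (((n / p : ℕ) : ZMod n)))) =
        (y + ·) '' ↑(AddSubgroup.zmultiples (((n / p : ℕ) : ZMod n)))) :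
    ∀ p : ℕ, p.Prime → p ∣ n → ∀ x : ZMod n, ∃ y : ZMod n,
      ⇑σ.symm '' ((x + ·) '' ↑(AddSubgroup.zmultiples (((n / p : ℕ) : ZMod n)))) =
        (y + ·) '' ↑(AddSubgroup.zmultiples (((n / p : ℕ) : ZMod n))) := by
  intro p hp hpn x
  set Z : Set (ZMod n) := ↑(AddSubgroup.zmultiples (((n / p : ℕ) : ZMod n))) with hZ
  obtain ⟨y, hy⟩ := hσ p hp hpn (σ.symm x)
  have hx_mem : x ∈ (y + ·) '' Z := by
    rw [← hy]
    exact ⟨σ.symm x, ⟨0, AddSubgroup.zero_mem _, add_zero _⟩, σ.apply_symm_apply x⟩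
  obtain ⟨t, ht, hxt⟩ := hx_mem
  have htrans : (fun z => t + z) '' Z = Z := by
    ext u
    constructor
    · rintro ⟨w, hw, rfl⟩
      exact AddSubgroup.add_mem _ ht hw
    · intro hu
      exact ⟨u - t, AddSubgroup.sub_mem _ hu ht, by ring⟩
  have hxZ : (x + ·) '' Z = (y + ·) '' Z := by
    have hxeq : x = y + t := hxt.symm
    rw [hxeq]
    have hcomp : (fun z => (y + t) + z) = (fun z => y + z) ∘ (fun z => t + z) := by
      funext z
      simp [add_assoc]
    show (fun z => (y + t) + z) '' Z = (fun z => y + z) '' Z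
    rw [hcomp, Set.image_comp, htrans]
  refine ⟨σ.symm x, ?_⟩
  calc ⇑σ.symm '' ((x + ·) '' Z) = ⇑σ.symm '' ((y + ·) '' Z) := by rw [hxZ]
    _ = ⇑σ.symm '' (⇑σ '' ((σ.symm x + ·) '' Z)) := by rw [hy]
    _ = (σ.symm x + ·) '' Z := Equiv.symm_image_image σ _

lemma sum_over_s (s : Finset ℂ) (hs : ↑s ⊆ Set.range (zeta n)) (F : ℂ → ℂ) :
    ∑ z ∈ s, F z
      = ∑ k ∈ Finset.univ.filter (fun k : ZMod n => zeta n k ∈ s), F (zeta n k) := by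
  classical
  have himg : s = (Finset.univ.filter (fun k : ZMod n => zeta n k ∈ s)).image (zeta n) := by
    ext z
    simp only [Finset.mem_image, Finset.mem_filter, Finset.mem_univ, true_and]
    constructor
    · intro hz
      obtain ⟨k, hk⟩ := hs hz
      exact ⟨k, by rwa [hk], hk⟩
    · rintro ⟨k, hk, rfl⟩
      exact hk
  conv_lhs => rw [himg]
  exact Finset.sum_image (fun a _ b _ h => zeta_inj h)

section Transfer

variable (hn : 2 ≤ n) (σ : Equiv.Perm (ZMod n))
  (hσ : ∀ p : ℕ, p.Prime → p ∣ n → ∀ x : ZMod n, ∃ y : ZMod n,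
      ⇑σ '' ((x + ·) '' ↑(AddSubgroup.zmultiples (((n / p : ℕ) : ZMod n)))) =
        (y + ·) '' ↑(AddSubgroup.zmultiples (((n / p : ℕ) : ZMod n))))
  (E : Set (ZMod n))

include hn hσ

lemma qi_dir (h : QuasiIndep (zeta n '' E)) : QuasiIndep (zeta n '' (⇑σ '' E)) := by
  classical
  intro s ε hs hval hsum
  have hsub : ∀ k : ZMod n, zeta n k ∈ s → k ∈ ⇑σ '' E := by
    intro k hk
    obtain ⟨w, hw, hwk⟩ := hs hk
    rwa [← zeta_inj hwk]
  have hsrange : ↑s ⊆ Set.range (zeta n) :=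
    fun z hz => (Set.image_subset_range (zeta n) _) (hs hz)
  set g : ZMod n → ℚ := fun k => if zeta n k ∈ s then (ε (zeta n k) : ℚ) else 0 with hg
  have hrel : ∑ k : ZMod n, (g k : ℂ) * zc n ^ k.val = 0 := by
    have h1 : ∑ k : ZMod n, (g k : ℂ) * zc n ^ k.val
        = ∑ k ∈ Finset.univ.filter (fun k : ZMod n => zeta n k ∈ s),
            (ε (zeta n k) : ℂ) * zeta n k := by
      rw [← Finset.sum_subset (Finset.subset_univ _) (fun k _ hk => ?_)]
      · refine Finset.sum_congr rfl fun k hk => ?_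
        rw [Finset.mem_filter] at hk
        rw [hg]
        simp only [if_pos hk.2]
        rw [zeta_eq]
        push_cast
        ring
      · rw [Finset.mem_filter] at hk
        simp only [Finset.mem_univ, true_and] at hk
        rw [hg]
        simp [hk]
    rw [h1, ← sum_over_s s hsrange (fun z => (ε z : ℂ) * z)]
    exact hsum
  have hrel2 := main_rel hn σ.symm (hsigma_symm σ hσ) g hrel
  simp only [Equiv.symm_symm] at hrel2
  set t : Finset (ZMod n) := Finset.univ.filter (fun k : ZMod n => zeta n (σ k) ∈ s) with htdef
  set s' : Finset ℂ := t.image (zeta n) with hs'def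
  set ε' : ℂ → ℤ := fun z => ε (zeta n (σ (Function.invFun (zeta n) z))) with hε'def
  have hinv : ∀ k : ZMod n, Function.invFun (zeta n) (zeta n k) = k :=
    fun k => Function.leftInverse_invFun (zeta_inj (n := n)) k
  have hε' : ∀ k : ZMod n, ε' (zeta n k) = ε (zeta n (σ k)) := by
    intro k
    rw [hε'def]
    simp only [hinv]
  have hmem_t : ∀ k ∈ t, k ∈ E := by
    intro k hk
    rw [htdef, Finset.mem_filter] at hk
    obtain ⟨e, he, hek⟩ := hsub (σ k) hk.2
    rwa [← σ.injective hek]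
  have hsub' : ↑s' ⊆ zeta n '' E := by
    rintro z hz
    simp only [hs'def, Finset.coe_image, Set.mem_image, Finset.mem_coe] at hz
    obtain ⟨k, hk, rfl⟩ := hz
    exact ⟨k, hmem_t k hk, rfl⟩
  have hval' : ∀ z ∈ s', ε' z = 0 ∨ ε' z = 1 ∨ ε' z = -1 := by
    intro z hz
    rw [hs'def, Finset.mem_image] at hz
    obtain ⟨k, hk, rfl⟩ := hz
    rw [hε']
    rw [htdef, Finset.mem_filter] at hk
    exact hval _ hk.2
  have hsum' : ∑ z ∈ s', (ε' z : ℂ) * z = 0 := by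
    rw [hs'def, Finset.sum_image (fun a _ b _ h => zeta_inj h)]
    have h2 : ∑ k : ZMod n, (g (σ k) : ℂ) * zc n ^ k.val
        = ∑ k ∈ t, (ε' (zeta n k) : ℂ) * zeta n k := by
      rw [← Finset.sum_subset (Finset.subset_univ t) (fun k _ hk => ?_)]
      · refine Finset.sum_congr rfl fun k hk => ?_
        rw [htdef, Finset.mem_filter] at hk
        rw [hε', hg]
        simp only [if_pos hk.2]
        rw [zeta_eq k]
        push_cast
        ring
      · have hk2 : ¬ zeta n (σ k) ∈ s := by
          rw [htdef, Finset.mem_filter] at hk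
          simpa using hk
        rw [hg]
        simp [hk2]
    rw [← h2]
    exact hrel2
  have hconc := h s' ε' hsub' hval' hsum'
  intro z hz
  obtain ⟨w, hw, rfl⟩ := hs hz
  obtain ⟨e, heE, rfl⟩ := hw
  have hkt : σ.symm (σ e) ∈ t := by
    rw [htdef, Finset.mem_filter]
    refine ⟨Finset.mem_univ _, ?_⟩
    rw [σ.apply_symm_apply]
    exact hz
  have hzs' : zeta n (σ.symm (σ e)) ∈ s' := by
    rw [hs'def, Finset.mem_image]
    exact ⟨_, hkt, rfl⟩
  have := hconc _ hzs'
  rw [hε', σ.apply_symm_apply] at this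
  exact this

lemma ind_dir (h : Indep (zeta n '' E)) : Indep (zeta n '' (⇑σ '' E)) := by
  classical
  intro s ε hs hsum
  have hsub : ∀ k : ZMod n, zeta n k ∈ s → k ∈ ⇑σ '' E := by
    intro k hk
    obtain ⟨w, hw, hwk⟩ := hs hk
    rwa [← zeta_inj hwk]
  have hsrange : ↑s ⊆ Set.range (zeta n) :=
    fun z hz => (Set.image_subset_range (zeta n) _) (hs hz)
  set g : ZMod n → ℚ := fun k => if zeta n k ∈ s then ε (zeta n k) else 0 with hg
  have hrel : ∑ k : ZMod n, (g k : ℂ) * zc n ^ k.val = 0 := by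
    have h1 : ∑ k : ZMod n, (g k : ℂ) * zc n ^ k.val
        = ∑ k ∈ Finset.univ.filter (fun k : ZMod n => zeta n k ∈ s),
            (ε (zeta n k) : ℂ) * zeta n k := by
      rw [← Finset.sum_subset (Finset.subset_univ _) (fun k _ hk => ?_)]
      · refine Finset.sum_congr rfl fun k hk => ?_
        rw [Finset.mem_filter] at hk
        rw [hg]
        simp only [if_pos hk.2]
        rw [zeta_eq]
      · rw [Finset.mem_filter] at hk
        simp only [Finset.mem_univ, true_and] at hk
        rw [hg]
        simp [hk]
    rw [h1, ← sum_over_s s hsrange (fun z => (ε z : ℂ) * z)]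
    exact hsum
  have hrel2 := main_rel hn σ.symm (hsigma_symm σ hσ) g hrel
  simp only [Equiv.symm_symm] at hrel2
  set t : Finset (ZMod n) := Finset.univ.filter (fun k : ZMod n => zeta n (σ k) ∈ s) with htdef
  set s' : Finset ℂ := t.image (zeta n) with hs'def
  set ε' : ℂ → ℚ := fun z => ε (zeta n (σ (Function.invFun (zeta n) z))) with hε'def
  have hinv : ∀ k : ZMod n, Function.invFun (zeta n) (zeta n k) = k :=
    fun k => Function.leftInverse_invFun (zeta_inj (n := n)) k
  have hε' : ∀ k : ZMod n, ε' (zeta n k) = ε (zeta n (σ k)) := by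
    intro k
    rw [hε'def]
    simp only [hinv]
  have hmem_t : ∀ k ∈ t, k ∈ E := by
    intro k hk
    rw [htdef, Finset.mem_filter] at hk
    obtain ⟨e, he, hek⟩ := hsub (σ k) hk.2
    rwa [← σ.injective hek]
  have hsub' : ↑s' ⊆ zeta n '' E := by
    rintro z hz
    simp only [hs'def, Finset.coe_image, Set.mem_image, Finset.mem_coe] at hz
    obtain ⟨k, hk, rfl⟩ := hz
    exact ⟨k, hmem_t k hk, rfl⟩
  have hsum' : ∑ z ∈ s', (ε' z : ℂ) * z = 0 := by
    rw [hs'def, Finset.sum_image (fun a _ b _ h => zeta_inj h)]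
    have h2 : ∑ k : ZMod n, (g (σ k) : ℂ) * zc n ^ k.val
        = ∑ k ∈ t, (ε' (zeta n k) : ℂ) * zeta n k := by
      rw [← Finset.sum_subset (Finset.subset_univ t) (fun k _ hk => ?_)]
      · refine Finset.sum_congr rfl fun k hk => ?_
        rw [htdef, Finset.mem_filter] at hk
        rw [hε', hg]
        simp only [if_pos hk.2]
        rw [zeta_eq k]
      · have hk2 : ¬ zeta n (σ k) ∈ s := by
          rw [htdef, Finset.mem_filter] at hk
          simpa using hk
        rw [hg]
        simp [hk2]
    rw [← h2]
    exact hrel2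
  have hconc := h s' ε' hsub' hsum'
  intro z hz
  obtain ⟨w, hw, rfl⟩ := hs hz
  obtain ⟨e, heE, rfl⟩ := hw
  have hkt : σ.symm (σ e) ∈ t := by
    rw [htdef, Finset.mem_filter]
    refine ⟨Finset.mem_univ _, ?_⟩
    rw [σ.apply_symm_apply]
    exact hz
  have hzs' : zeta n (σ.symm (σ e)) ∈ s' := by
    rw [hs'def, Finset.mem_image]
    exact ⟨_, hkt, rfl⟩
  have := hconc _ hzs'
  rw [hε', σ.apply_symm_apply] at this
  exact this

end Transfer

end Stmt10Aux

theorem stmt_10 (n : ℕ) (hn : 2 ≤ n) (σ : Equiv.Perm (ZMod n))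
    (hσ : ∀ p : ℕ, p.Prime → p ∣ n → ∀ x : ZMod n, ∃ y : ZMod n,
      σ '' ((x + ·) '' ↑(AddSubgroup.zmultiples (((n / p : ℕ) : ZMod n)))) =
        (y + ·) '' ↑(AddSubgroup.zmultiples (((n / p : ℕ) : ZMod n))))
    (E : Set (ZMod n)) :
    (QuasiIndep (zeta n '' E) ↔ QuasiIndep (zeta n '' (σ '' E))) ∧
    (Indep (zeta n '' E) ↔ Indep (zeta n '' (σ '' E))) := by
  haveI : NeZero n := ⟨by omega⟩
  have hσ' := Stmt10Aux.hsigma_symm σ hσ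
  have hEE : ⇑σ.symm '' (⇑σ '' E) = E := Equiv.symm_image_image σ E
  constructor
  · constructor
    · exact Stmt10Aux.qi_dir hn σ hσ E
    · intro h
      have := Stmt10Aux.qi_dir hn σ.symm hσ' (⇑σ '' E) h
      rwa [hEE] at this
  · constructor
    · exact Stmt10Aux.ind_dir hn σ hσ E
    · intro h
      have := Stmt10Aux.ind_dir hn σ.symm hσ' (⇑σ '' E) h
      rwa [hEE] at this
end

section
/- For all odd primes p < q < r, Ψ(pqr) ≥ φ(pqr) + 4, where Ψ(N) is the maximal size of a quasi-independent subset of the N-th roots of unity and φ is Euler's totient. (This may be derived from the base case Ψ(105) = φ(105) + 4 = 52 together with the monotonicity theorem for Ψ.) -/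
/-- `Psi N` is the maximal cardinality of a quasi-independent set of N-th roots of unity. -/
noncomputable def Psi (N : ℕ) : ℕ :=
  sSup {k | ∃ E : Finset ℂ, (∀ z ∈ E, z ^ N = 1) ∧ QuasiIndep ↑E ∧ E.card = k}

open Finset Module Pointwise

section Roots
variable {p q r : ℕ} {ζp ζq ζr : ℂ}

/-- Power reduction mod the order. -/
lemma pow_mod_order {n : ℕ} {ζ : ℂ} (hz : IsPrimitiveRoot ζ n) (hn : 0 < n) (t : ℕ) :
    ζ ^ t = ζ ^ (t % n) := by
  conv_lhs => rw [← Nat.div_add_mod t n]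
  rw [pow_add, pow_mul, hz.pow_eq_one, one_pow, one_mul]

/-- A primitive root which agrees with `ζall` on a coprime power lies in the adjoin. -/
lemma prim_mem_adjoin {n e : ℕ} {ζn ζall : ℂ} (hzn : IsPrimitiveRoot ζn n) (hn : 1 < n)
    (hcop : Nat.Coprime e n) (hpow : ζall ^ e = ζn ^ e) :
    ζn ∈ Algebra.adjoin ℚ ({ζall} : Set ℂ) := by
  obtain ⟨m, -, hm⟩ := Nat.exists_mul_mod_eq_one_of_coprime hcop hn
  have key : ζall ^ (e * m) = ζn := by
    rw [pow_mul, hpow, ← pow_mul, pow_mod_order hzn (by omega), hm, pow_one]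
  rw [← key]
  exact pow_mem (Algebra.self_mem_adjoin_singleton ℚ ζall) _

/-- Every power of a primitive p-th root lies in the span of the first p-1 powers. -/
lemma pow_mem_span_powers (hp : 1 < p) (hzp : IsPrimitiveRoot ζp p) (t : ℕ) :
    ζp ^ t ∈ Submodule.span ℚ (Set.range fun i : Fin (p - 1) => ζp ^ (i : ℕ)) := by
  have hmod : ζp ^ t = ζp ^ (t % p) := pow_mod_order hzp (by omega) t
  rw [hmod]
  have ht : t % p < p := Nat.mod_lt _ (by omega)
  rcases lt_or_eq_of_le (Nat.le_of_lt_succ (by omega : t % p < (p - 1) + 1)) with h | h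
  · exact Submodule.subset_span ⟨⟨t % p, h⟩, rfl⟩
  · have hsum : ∑ i ∈ range p, ζp ^ i = 0 := hzp.geom_sum_eq_zero hp
    have hp1 : p = (p - 1) + 1 := by omega
    rw [hp1, Finset.sum_range_succ] at hsum
    have : ζp ^ (p - 1) = -∑ i ∈ range (p - 1), ζp ^ i := by linear_combination hsum
    rw [h, this]
    exact Submodule.neg_mem _ (Submodule.sum_mem _ fun i hi =>
      Submodule.subset_span ⟨⟨i, Finset.mem_range.1 hi⟩, rfl⟩)

theorem trip_LI (hp : p.Prime) (hq : q.Prime) (hr : r.Prime)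
    (hpq : p ≠ q) (hpr : p ≠ r) (hqr : q ≠ r)
    (hzp : IsPrimitiveRoot ζp p) (hzq : IsPrimitiveRoot ζq q) (hzr : IsPrimitiveRoot ζr r) :
    LinearIndependent ℚ (fun x : Fin (p - 1) × Fin (q - 1) × Fin (r - 1) =>
      ζp ^ (x.1 : ℕ) * ζq ^ (x.2.1 : ℕ) * ζr ^ (x.2.2 : ℕ)) := by
  classical
  set v : Fin (p - 1) × Fin (q - 1) × Fin (r - 1) → ℂ := fun x =>
      ζp ^ (x.1 : ℕ) * ζq ^ (x.2.1 : ℕ) * ζr ^ (x.2.2 : ℕ) with hv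
  have hp1 : 1 < p := hp.one_lt
  have hq1 : 1 < q := hq.one_lt
  have hr1 : 1 < r := hr.one_lt
  have hcpq : Nat.Coprime p q := (Nat.coprime_primes hp hq).2 hpq
  have hcpr : Nat.Coprime p r := (Nat.coprime_primes hp hr).2 hpr
  have hcqr : Nat.Coprime q r := (Nat.coprime_primes hq hr).2 hqr
  -- ζ := ζp * ζq * ζr is a primitive pqr-th root
  have hop : orderOf ζp = p := hzp.eq_orderOf.symm
  have hoq : orderOf ζq = q := hzq.eq_orderOf.symm
  have hor : orderOf ζr = r := hzr.eq_orderOf.symm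
  have hopq : orderOf (ζp * ζq) = p * q := by
    rw [(Commute.all ζp ζq).orderOf_mul_eq_mul_orderOf_of_coprime (by rw [hop, hoq]; exact hcpq),
      hop, hoq]
  have hoN : orderOf (ζp * ζq * ζr) = p * q * r := by
    rw [(Commute.all (ζp * ζq) ζr).orderOf_mul_eq_mul_orderOf_of_coprime
      (by rw [hopq, hor]; exact (Nat.Coprime.mul hcpr hcqr : Nat.Coprime (p*q) r)),
      hopq, hor]
  set ζ : ℂ := ζp * ζq * ζr with hzdef
  have hζ : IsPrimitiveRoot ζ (p * q * r) := by
    have := IsPrimitiveRoot.orderOf ζ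
    rwa [hoN] at this
  have hNpos : 0 < p * q * r := by positivity
  have hint : IsIntegral ℚ ζ := ⟨Polynomial.X ^ (p * q * r) - 1,
    by simpa using Polynomial.monic_X_pow_sub_C (1 : ℚ) (by positivity),
    by simp [hζ.pow_eq_one]⟩
  set A := Algebra.adjoin ℚ ({ζ} : Set ℂ) with hA
  set V := Submodule.span ℚ (Set.range v) with hV
  set s1 := Set.range (fun i : Fin (p - 1) => ζp ^ (i : ℕ)) with hs1
  set s2 := Set.range (fun j : Fin (q - 1) => ζq ^ (j : ℕ)) with hs2
  set s3 := Set.range (fun k : Fin (r - 1) => ζr ^ (k : ℕ)) with hs3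
  have hsub : s1 * s2 * s3 ⊆ Set.range v := by
    rintro z ⟨w, ⟨x, ⟨i, rfl⟩, y, ⟨j, rfl⟩, rfl⟩, u, ⟨k, rfl⟩, rfl⟩
    exact ⟨(i, j, k), rfl⟩
  have hmulspan : Submodule.span ℚ s1 * Submodule.span ℚ s2 * Submodule.span ℚ s3 ≤ V := by
    rw [Submodule.span_mul_span, Submodule.span_mul_span, hV]
    exact Submodule.span_mono hsub
  have hpowmem : ∀ t : ℕ, ζ ^ t ∈ V := by
    intro t
    have hz : ζ ^ t = ζp ^ t * ζq ^ t * ζr ^ t := by rw [hzdef]; ring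
    rw [hz]
    exact hmulspan (Submodule.mul_mem_mul (Submodule.mul_mem_mul
      (pow_mem_span_powers hp1 hzp t) (pow_mem_span_powers hq1 hzq t))
      (pow_mem_span_powers hr1 hzr t))
  -- membership of the three roots in the adjoin algebra
  have hmp : ζp ∈ A := prim_mem_adjoin hzp hp1 (Nat.Coprime.mul hcpq.symm hcpr.symm)
    (by rw [hzdef, mul_pow, mul_pow]
        rw [show q * r = q * r from rfl]
        have h2 : ζq ^ (q * r) = 1 := by rw [pow_mul, hzq.pow_eq_one, one_pow]
        have h3 : ζr ^ (q * r) = 1 := by rw [mul_comm q r, pow_mul, hzr.pow_eq_one, one_pow]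
        rw [h2, h3, mul_one, mul_one])
  have hmq : ζq ∈ A := prim_mem_adjoin hzq hq1 (Nat.Coprime.mul hcpq hcqr.symm)
    (by rw [hzdef, mul_pow, mul_pow]
        have h1 : ζp ^ (p * r) = 1 := by rw [pow_mul, hzp.pow_eq_one, one_pow]
        have h3 : ζr ^ (p * r) = 1 := by rw [mul_comm p r, pow_mul, hzr.pow_eq_one, one_pow]
        rw [h1, h3, mul_one, one_mul])
  have hmr : ζr ∈ A := prim_mem_adjoin hzr hr1 (Nat.Coprime.mul hcpr hcqr)
    (by rw [hzdef, mul_pow, mul_pow]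
        have h1 : ζp ^ (p * q) = 1 := by rw [pow_mul, hzp.pow_eq_one, one_pow]
        have h2 : ζq ^ (p * q) = 1 := by rw [mul_comm p q, pow_mul, hzq.pow_eq_one, one_pow]
        rw [h1, h2, mul_one, one_mul])
  have hVA : V = Subalgebra.toSubmodule A := by
    apply le_antisymm
    · rw [hV, Submodule.span_le]
      rintro z ⟨x, rfl⟩
      simp only [SetLike.mem_coe, Subalgebra.mem_toSubmodule]
      exact mul_mem (mul_mem (pow_mem hmp _) (pow_mem hmq _)) (pow_mem hmr _)
    · rw [hA, Algebra.adjoin_eq_span, Submodule.span_le]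
      rintro z hz
      obtain ⟨n, rfl⟩ := Submonoid.mem_closure_singleton.1 hz
      exact hpowmem n
  have hfinV : FiniteDimensional ℚ V := FiniteDimensional.span_of_finite ℚ (Set.finite_range v)
  have htot : Nat.totient (p * q * r) = (p - 1) * ((q - 1) * (r - 1)) := by
    rw [Nat.totient_mul (Nat.Coprime.mul hcpr hcqr), Nat.totient_mul hcpq,
      Nat.totient_prime hp, Nat.totient_prime hq, Nat.totient_prime hr]
    ring
  have hfrA : finrank ℚ A = Nat.totient (p * q * r) := by
    haveI := (Algebra.adjoin.powerBasis hint).finite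
    rw [(Algebra.adjoin.powerBasis hint).finrank, Algebra.adjoin.powerBasis_dim,
      ← Polynomial.cyclotomic_eq_minpoly_rat hζ hNpos, Polynomial.natDegree_cyclotomic]
  have hfrV : finrank ℚ V = (p - 1) * ((q - 1) * (r - 1)) := by
    rw [hVA]
    rw [A.finrank_toSubmodule, hfrA, htot]
  -- linear independence via dimension count
  set T := Fintype.linearCombination ℚ v with hT
  have hrange : LinearMap.range T = V := by
    rw [hT, hV]; exact Fintype.range_linearCombination ℚ v
  haveI : FiniteDimensional ℚ ↥(LinearMap.range T) := by rw [hrange]; exact hfinV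
  have hdim : finrank ℚ ((Fin (p - 1) × Fin (q - 1) × Fin (r - 1)) → ℚ)
      = finrank ℚ ↥(LinearMap.range T) := by
    have h2 : finrank ℚ ↥(LinearMap.range T) = (p - 1) * ((q - 1) * (r - 1)) := by
      rw [hrange]; exact hfrV
    rw [h2, Module.finrank_fintype_fun_eq_card]
    simp [Fintype.card_prod]
  have hker : LinearMap.ker T = ⊥ := by
    rw [← LinearMap.ker_rangeRestrict,
      LinearMap.ker_eq_bot_iff_range_eq_top_of_finrank_eq_finrank hdim]
    exact LinearMap.range_eq_top.mpr (LinearMap.surjective_rangeRestrict T)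
  rw [Fintype.linearIndependent_iff]
  intro g hg
  have hTg : T g = 0 := by rw [hT, Fintype.linearCombination_apply]; exact hg
  have hg0 : g = 0 := by rwa [← LinearMap.mem_ker, hker, Submodule.mem_bot] at hTg
  intro i; rw [hg0]; rfl

end Roots

section MLS
variable {p q r : ℕ} {ζp ζq ζr : ℂ}

lemma reduce_inner {n : ℕ} {ζ : ℂ} (hn : 1 < n) (hz : IsPrimitiveRoot ζ n) (F : ℕ → ℂ) (w : ℂ) :
    ∑ k ∈ range n, F k * (w * ζ ^ k) = ∑ k ∈ range (n - 1), (F k - F (n - 1)) * (w * ζ ^ k) := by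
  have hsum : ∑ i ∈ range n, ζ ^ i = 0 := hz.geom_sum_eq_zero hn
  have hn1 : n - 1 + 1 = n := by omega
  have hz1 : ∑ i ∈ range (n - 1), ζ ^ i = -ζ ^ (n - 1) := by
    rw [← hn1, sum_range_succ] at hsum
    linear_combination hsum
  rw [← hn1, sum_range_succ, hn1]
  simp only [sub_mul]
  rw [Finset.sum_sub_distrib]
  have : ∑ k ∈ range (n - 1), F (n - 1) * (w * ζ ^ k) = F (n - 1) * w * ∑ k ∈ range (n-1), ζ ^ k := by
    rw [Finset.mul_sum]; exact Finset.sum_congr rfl fun k _ => by ring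
  rw [this, hz1]
  ring

theorem ML_sum (hp : p.Prime) (hq : q.Prime) (hr : r.Prime)
    (hpq : p ≠ q) (hpr : p ≠ r) (hqr : q ≠ r)
    (hzp : IsPrimitiveRoot ζp p) (hzq : IsPrimitiveRoot ζq q) (hzr : IsPrimitiveRoot ζr r)
    (c : ℕ → ℕ → ℕ → ℤ)
    (h : ∑ i ∈ range (p - 1), ∑ j ∈ range (q - 1), ∑ k ∈ range (r - 1),
        (c i j k : ℂ) * (ζp ^ i * ζq ^ j * ζr ^ k) = 0) :
    ∀ i < p - 1, ∀ j < q - 1, ∀ k < r - 1, c i j k = 0 := by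
  have hLI := trip_LI hp hq hr hpq hpr hqr hzp hzq hzr
  rw [Fintype.linearIndependent_iff] at hLI
  intro i hi j hj k hk
  have hsum : ∑ x : Fin (p - 1) × Fin (q - 1) × Fin (r - 1),
      ((c (x.1 : ℕ) (x.2.1 : ℕ) (x.2.2 : ℕ) : ℚ)) •
        (ζp ^ (x.1 : ℕ) * ζq ^ (x.2.1 : ℕ) * ζr ^ (x.2.2 : ℕ)) = 0 := by
    rw [Fintype.sum_prod_type]
    simp_rw [Fintype.sum_prod_type]
    simp only [Finset.sum_range] at h
    rw [← h]
    refine Finset.sum_congr rfl fun i' _ => ?_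
    refine Finset.sum_congr rfl fun j' _ => ?_
    refine Finset.sum_congr rfl fun k' _ => ?_
    rw [Rat.smul_def]
    push_cast
    ring
  have := hLI (fun x => (c (x.1 : ℕ) (x.2.1 : ℕ) (x.2.2 : ℕ) : ℚ)) hsum
    (⟨i, hi⟩, ⟨j, hj⟩, ⟨k, hk⟩)
  exact_mod_cast this

end MLS

theorem vanish_structure {p q r : ℕ} {ζp ζq ζr : ℂ}
    (hp : p.Prime) (hq : q.Prime) (hr : r.Prime)
    (hpq : p ≠ q) (hpr : p ≠ r) (hqr : q ≠ r)
    (hzp : IsPrimitiveRoot ζp p) (hzq : IsPrimitiveRoot ζq q) (hzr : IsPrimitiveRoot ζr r)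
    (a : ℕ → ℕ → ℕ → ℤ)
    (h : ∑ i ∈ range p, ∑ j ∈ range q, ∑ k ∈ range r,
        (a i j k : ℂ) * (ζp ^ i * ζq ^ j * ζr ^ k) = 0) :
    ∀ i < p, ∀ j < q, ∀ k < r,
      a i j k = a i j (r-1) + a i (q-1) k + a (p-1) j k
        - a i (q-1) (r-1) - a (p-1) j (r-1) - a (p-1) (q-1) k + a (p-1) (q-1) (r-1) := by
  have hp1 : 1 < p := hp.one_lt
  have hq1 : 1 < q := hq.one_lt
  have hr1 : 1 < r := hr.one_lt
  set b1 : ℕ → ℕ → ℕ → ℤ := fun i j k => a i j k - a i j (r-1) with hb1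
  set b2 : ℕ → ℕ → ℕ → ℤ := fun i j k => b1 i j k - b1 i (q-1) k with hb2
  set b3 : ℕ → ℕ → ℕ → ℤ := fun i j k => b2 i j k - b2 (p-1) j k with hb3
  -- Step 1: reduce over k
  have h1 : ∑ i ∈ range p, ∑ j ∈ range q, ∑ k ∈ range (r-1),
      (b1 i j k : ℂ) * (ζp ^ i * ζq ^ j * ζr ^ k) = 0 := by
    rw [← h]
    refine Finset.sum_congr rfl fun i _ => Finset.sum_congr rfl fun j _ => ?_
    rw [reduce_inner hr1 hzr (fun k => ((a i j k : ℤ) : ℂ)) (ζp ^ i * ζq ^ j)]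
    refine Finset.sum_congr rfl fun k _ => ?_
    rw [hb1]; push_cast; ring
  -- Step 2: reduce over j
  have h2 : ∑ i ∈ range p, ∑ j ∈ range (q-1), ∑ k ∈ range (r-1),
      (b2 i j k : ℂ) * (ζp ^ i * ζq ^ j * ζr ^ k) = 0 := by
    rw [← h1]
    refine Finset.sum_congr rfl fun i _ => ?_
    have lhs : ∑ j ∈ range q, ∑ k ∈ range (r-1), (b1 i j k : ℂ) * (ζp ^ i * ζq ^ j * ζr ^ k)
        = ∑ j ∈ range q, (fun j => ∑ k ∈ range (r-1), (b1 i j k : ℂ) * (ζp ^ i * ζr ^ k)) j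
            * ((1:ℂ) * ζq ^ j) := by
      refine Finset.sum_congr rfl fun j _ => ?_
      rw [Finset.sum_mul]
      exact Finset.sum_congr rfl fun k _ => by ring
    rw [lhs, reduce_inner hq1 hzq _ 1]
    refine Finset.sum_congr rfl fun j _ => ?_
    rw [← Finset.sum_sub_distrib, Finset.sum_mul]
    refine Finset.sum_congr rfl fun k _ => ?_
    rw [hb2]; push_cast; ring
  -- Step 3: reduce over i
  have h3 : ∑ i ∈ range (p-1), ∑ j ∈ range (q-1), ∑ k ∈ range (r-1),
      (b3 i j k : ℂ) * (ζp ^ i * ζq ^ j * ζr ^ k) = 0 := by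
    rw [← h2]
    have lhs : ∑ i ∈ range p, ∑ j ∈ range (q-1), ∑ k ∈ range (r-1),
          (b2 i j k : ℂ) * (ζp ^ i * ζq ^ j * ζr ^ k)
        = ∑ i ∈ range p, (fun i => ∑ j ∈ range (q-1), ∑ k ∈ range (r-1),
            (b2 i j k : ℂ) * (ζq ^ j * ζr ^ k)) i * ((1:ℂ) * ζp ^ i) := by
      refine Finset.sum_congr rfl fun i _ => ?_
      rw [Finset.sum_mul]
      refine Finset.sum_congr rfl fun j _ => ?_
      rw [Finset.sum_mul]
      exact Finset.sum_congr rfl fun k _ => by ring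
    rw [lhs, reduce_inner hp1 hzp _ 1]
    refine Finset.sum_congr rfl fun i _ => ?_
    rw [← Finset.sum_sub_distrib, Finset.sum_mul]
    refine Finset.sum_congr rfl fun j _ => ?_
    rw [← Finset.sum_sub_distrib, Finset.sum_mul]
    refine Finset.sum_congr rfl fun k _ => ?_
    rw [hb3]; push_cast; ring
  have key := ML_sum hp hq hr hpq hpr hqr hzp hzq hzr b3 h3
  intro i hi j hj k hk
  by_cases hik : i = p - 1
  · subst hik; omega
  by_cases hjk : j = q - 1
  · subst hjk; omega
  by_cases hkk : k = r - 1
  · subst hkk; omega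
  have := key i (by omega) j (by omega) k (by omega)
  simp only [hb3, hb2, hb1] at this
  omega

section Support

/-- exponent congruence from equal powers of a primitive root -/
lemma prim_pow_inj_mod {n : ℕ} {ζ : ℂ} (hz : IsPrimitiveRoot ζ n) (hn : 0 < n) {A B : ℕ}
    (h : ζ ^ A = ζ ^ B) : A % n = B % n := by
  rw [pow_mod_order hz hn A, pow_mod_order hz hn B] at h
  exact hz.pow_inj (Nat.mod_lt _ hn) (Nat.mod_lt _ hn) h

lemma quasiIndep_empty : QuasiIndep ↑(∅ : Finset ℂ) := by
  intro s ε hs hvals hsum z hz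
  rw [Finset.coe_empty, Set.subset_empty_iff, Finset.coe_eq_empty] at hs
  subst hs
  exact absurd hz (Finset.notMem_empty z)

lemma quasi_to_array {E : Finset ℂ} (hQI : QuasiIndep ↑E) (cube : Finset (ℕ × ℕ × ℕ))
    (m : ℕ × ℕ × ℕ → ℂ) (hinj : Set.InjOn m ↑cube) (b : ℕ × ℕ × ℕ → ℤ)
    (hvals : ∀ x, b x = 0 ∨ b x = 1 ∨ b x = -1)
    (hsupp : ∀ x ∈ cube, b x ≠ 0 → m x ∈ E)
    (hsum : ∑ x ∈ cube, (b x : ℂ) * m x = 0) : ∀ x ∈ cube, b x = 0 := by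
  classical
  set t := cube.filter (fun x => b x ≠ 0) with ht
  set s := t.image m with hs
  set ε : ℂ → ℤ := fun z => ∑ x ∈ t.filter (fun x => m x = z), b x with hε
  have htc : t ⊆ cube := Finset.filter_subset _ _
  have hepsb : ∀ x₀ ∈ t, ε (m x₀) = b x₀ := by
    intro x₀ hx₀
    have : t.filter (fun x => m x = m x₀) = {x₀} := by
      ext y
      simp only [Finset.mem_filter, Finset.mem_singleton]
      constructor
      · rintro ⟨hy, hym⟩
        exact hinj (htc hy) (htc hx₀) hym
      · rintro rfl; exact ⟨hx₀, rfl⟩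
    rw [hε]; simp only [this, Finset.sum_singleton]
  have hsE : ↑s ⊆ (↑E : Set ℂ) := by
    intro z hz
    simp only [hs, Finset.coe_image, Set.mem_image, Finset.mem_coe] at hz
    obtain ⟨x, hx, rfl⟩ := hz
    rw [ht, Finset.mem_filter] at hx
    exact hsupp x hx.1 hx.2
  have hvals' : ∀ z ∈ s, ε z = 0 ∨ ε z = 1 ∨ ε z = -1 := by
    intro z hz
    rw [hs, Finset.mem_image] at hz
    obtain ⟨x, hx, rfl⟩ := hz
    rw [hepsb x hx]
    exact hvals x
  have hsum' : ∑ z ∈ s, (ε z : ℂ) * z = 0 := by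
    rw [hs, Finset.sum_image (fun x hx y hy hxy => hinj (htc hx) (htc hy) hxy)]
    have e1 : ∑ x ∈ t, (ε (m x) : ℂ) * m x = ∑ x ∈ t, (b x : ℂ) * m x :=
      Finset.sum_congr rfl fun x hx => by rw [hepsb x hx]
    have e2 : ∑ x ∈ t, (b x : ℂ) * m x = ∑ x ∈ cube, (b x : ℂ) * m x := by
      rw [ht]
      refine Finset.sum_filter_of_ne fun x _ hne => ?_
      intro hbx
      exact hne (by rw [hbx, Int.cast_zero, zero_mul])
    rw [e1, e2, hsum]
  have hall := hQI s ε hsE hvals' hsum'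
  intro x hx
  by_contra hbx
  have hxt : x ∈ t := by rw [ht, Finset.mem_filter]; exact ⟨hx, hbx⟩
  have h0 : ε (m x) = 0 := hall (m x) (Finset.mem_image_of_mem m hxt)
  rw [hepsb x hxt] at h0
  exact hbx h0

end Support

section Psi1

lemma psiSet_bddAbove {N : ℕ} (hN : 0 < N) :
    BddAbove {k | ∃ E : Finset ℂ, (∀ z ∈ E, z ^ N = 1) ∧ QuasiIndep ↑E ∧ E.card = k} := by
  refine ⟨N, fun k hk => ?_⟩
  obtain ⟨E, hroots, _, hcard⟩ := hk
  have hsub : E ⊆ Polynomial.nthRootsFinset N (1 : ℂ) := fun z hz =>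
    (Polynomial.mem_nthRootsFinset hN 1).2 (hroots z hz)
  have := Finset.card_le_card hsub
  rw [hcard, (Complex.isPrimitiveRoot_exp N hN.ne').card_nthRootsFinset] at this
  exact this

lemma psi_ge {N n : ℕ} (hN : 0 < N)
    (h : ∃ E : Finset ℂ, (∀ z ∈ E, z ^ N = 1) ∧ QuasiIndep ↑E ∧ E.card = n) :
    n ≤ Psi N :=
  le_csSup (psiSet_bddAbove hN) h

lemma psi_attained {N : ℕ} (hN : 0 < N) :
    ∃ E : Finset ℂ, (∀ z ∈ E, z ^ N = 1) ∧ QuasiIndep ↑E ∧ E.card = Psi N := by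
  have hne : {k | ∃ E : Finset ℂ, (∀ z ∈ E, z ^ N = 1) ∧ QuasiIndep ↑E ∧ E.card = k}.Nonempty :=
    ⟨0, ∅, by simp, quasiIndep_empty, rfl⟩
  exact Nat.sSup_mem hne (psiSet_bddAbove hN)

lemma tot3 {p q r : ℕ} (hp : p.Prime) (hq : q.Prime) (hr : r.Prime)
    (hpq : p ≠ q) (hpr : p ≠ r) (hqr : q ≠ r) :
    Nat.totient (p * q * r) = (p - 1) * ((q - 1) * (r - 1)) := by
  have hcpq : Nat.Coprime p q := (Nat.coprime_primes hp hq).2 hpq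
  have hcpr : Nat.Coprime p r := (Nat.coprime_primes hp hr).2 hpr
  have hcqr : Nat.Coprime q r := (Nat.coprime_primes hq hr).2 hqr
  rw [Nat.totient_mul (Nat.Coprime.mul hcpr hcqr), Nat.totient_mul hcpq,
    Nat.totient_prime hp, Nat.totient_prime hq, Nat.totient_prime hr]
  ring

end Psi1

section Cube
variable {p q r : ℕ} {ζp ζq ζr : ℂ}

lemma prim_root_mul (hzp : IsPrimitiveRoot ζp p) (hzq : IsPrimitiveRoot ζq q)
    (hzr : IsPrimitiveRoot ζr r) (hcpq : Nat.Coprime p q) (hcpr : Nat.Coprime p r)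
    (hcqr : Nat.Coprime q r) : IsPrimitiveRoot (ζp * ζq * ζr) (p * q * r) := by
  have hop : orderOf ζp = p := hzp.eq_orderOf.symm
  have hoq : orderOf ζq = q := hzq.eq_orderOf.symm
  have hor : orderOf ζr = r := hzr.eq_orderOf.symm
  have hopq : orderOf (ζp * ζq) = p * q := by
    rw [(Commute.all ζp ζq).orderOf_mul_eq_mul_orderOf_of_coprime (by rw [hop, hoq]; exact hcpq),
      hop, hoq]
  have hoN : orderOf (ζp * ζq * ζr) = p * q * r := by
    rw [(Commute.all (ζp * ζq) ζr).orderOf_mul_eq_mul_orderOf_of_coprime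
      (by rw [hopq, hor]; exact (Nat.Coprime.mul hcpr hcqr : Nat.Coprime (p*q) r)),
      hopq, hor]
  have := IsPrimitiveRoot.orderOf (ζp * ζq * ζr)
  rwa [hoN] at this

lemma cube_injOn (hp : p.Prime) (hq : q.Prime) (hr : r.Prime)
    (hpq : p ≠ q) (hpr : p ≠ r) (hqr : q ≠ r)
    (hzp : IsPrimitiveRoot ζp p) (hzq : IsPrimitiveRoot ζq q) (hzr : IsPrimitiveRoot ζr r) :
    Set.InjOn (fun x : ℕ × ℕ × ℕ => ζp ^ x.1 * ζq ^ x.2.1 * ζr ^ x.2.2)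
      ↑((range p) ×ˢ ((range q) ×ˢ (range r))) := by
  have hp0 : 0 < p := hp.pos
  have hq0 : 0 < q := hq.pos
  have hr0 : 0 < r := hr.pos
  have hcpq : Nat.Coprime p q := (Nat.coprime_primes hp hq).2 hpq
  have hcpr : Nat.Coprime p r := (Nat.coprime_primes hp hr).2 hpr
  have hcqr : Nat.Coprime q r := (Nat.coprime_primes hq hr).2 hqr
  rintro ⟨i, j, k⟩ hx ⟨i', j', k'⟩ hy h
  simp only [Finset.coe_product, Set.mem_prod, Finset.mem_coe, Finset.mem_range] at hx hy
  obtain ⟨hi, hj, hk⟩ := hx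
  obtain ⟨hi', hj', hk'⟩ := hy
  simp only at h
  have key : ∀ (n1 n2 n3 : ℕ) (z1 z2 z3 : ℂ), IsPrimitiveRoot z1 n1 → 0 < n1 →
      z1 ^ n1 = 1 → z2 ^ n2 = 1 → z3 ^ n3 = 1 → ∀ (a b c a' b' c' : ℕ), a < n1 → a' < n1 →
      Nat.Coprime n1 (n2 * n3) →
      z1 ^ a * z2 ^ b * z3 ^ c = z1 ^ a' * z2 ^ b' * z3 ^ c' → a = a' := by
    intro n1 n2 n3 z1 z2 z3 hz1 hn1 h1 hz2 hz3 a b c a' b' c' ha ha' hcop hh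
    have hpow := congrArg (· ^ (n2 * n3)) hh
    simp only [mul_pow, ← pow_mul] at hpow
    have e2 : ∀ b : ℕ, z2 ^ (b * (n2 * n3)) = 1 := fun b => by
      rw [show b * (n2 * n3) = n2 * (b * n3) by ring, pow_mul, hz2, one_pow]
    have e3 : ∀ c : ℕ, z3 ^ (c * (n2 * n3)) = 1 := fun c => by
      rw [show c * (n2 * n3) = n3 * (c * n2) by ring, pow_mul, hz3, one_pow]
    simp only [e2, e3, mul_one] at hpow
    have hmod := prim_pow_inj_mod hz1 hn1 hpow
    have hmod2 : a ≡ a' [MOD n1] := Nat.ModEq.cancel_right_of_coprime hcop hmod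
    rwa [Nat.ModEq, Nat.mod_eq_of_lt ha, Nat.mod_eq_of_lt ha'] at hmod2
  have h1 : i = i' := key p q r ζp ζq ζr hzp hp0 hzp.pow_eq_one hzq.pow_eq_one hzr.pow_eq_one
    i j k i' j' k' hi hi' (hcpq.mul_right hcpr) h
  have h2 : j = j' := by
    refine key q p r ζq ζp ζr hzq hq0 hzq.pow_eq_one hzp.pow_eq_one hzr.pow_eq_one
      j i k j' i' k' hj hj' (hcpq.symm.mul_right hcqr) ?_
    linear_combination h
  have h3 : k = k' := by
    refine key r p q ζr ζp ζq hzr hr0 hzr.pow_eq_one hzp.pow_eq_one hzq.pow_eq_one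
      k i j k' i' j' hk hk' (hcpr.symm.mul_right hcqr.symm) ?_
    linear_combination h
  simp [h1, h2, h3]

lemma cube_surj (hp : 0 < p) (hq : 0 < q) (hr : 0 < r)
    (hzp : IsPrimitiveRoot ζp p) (hzq : IsPrimitiveRoot ζq q) (hzr : IsPrimitiveRoot ζr r)
    (hcpq : Nat.Coprime p q) (hcpr : Nat.Coprime p r) (hcqr : Nat.Coprime q r)
    {z : ℂ} (hz : z ^ (p * q * r) = 1) :
    ∃ x ∈ (range p) ×ˢ ((range q) ×ˢ (range r)),
      ζp ^ x.1 * ζq ^ x.2.1 * ζr ^ x.2.2 = z := by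
  have hζ : IsPrimitiveRoot (ζp * ζq * ζr) (p * q * r) :=
    prim_root_mul hzp hzq hzr hcpq hcpr hcqr
  haveI : NeZero (p * q * r) := ⟨by positivity⟩
  obtain ⟨t, _, hte⟩ := hζ.eq_pow_of_pow_eq_one hz
  refine ⟨(t % p, t % q, t % r), ?_, ?_⟩
  · simp only [Finset.mem_product, Finset.mem_range]
    exact ⟨Nat.mod_lt _ hp, Nat.mod_lt _ hq, Nat.mod_lt _ hr⟩
  · simp only
    rw [← pow_mod_order hzp hp, ← pow_mod_order hzq hq, ← pow_mod_order hzr hr, ← hte]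
    rw [mul_pow, mul_pow]

end Cube

section Step
open Complex Real

theorem step_lemma {p q r p' M M' n : ℕ}
    (hp : p.Prime) (hq : q.Prime) (hr : r.Prime) (hp' : p'.Prime)
    (hpq : p ≠ q) (hpr : p ≠ r) (hqr : q ≠ r) (hp'q : p' ≠ q) (hp'r : p' ≠ r)
    (hpp' : p ≤ p') (hM : M = p * q * r) (hM' : M' = p' * q * r)
    (hn : ∃ E : Finset ℂ, (∀ z ∈ E, z ^ M = 1) ∧ QuasiIndep ↑E ∧ E.card = n) :
    ∃ E' : Finset ℂ, (∀ z ∈ E', z ^ M' = 1) ∧ QuasiIndep ↑E' ∧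
      E'.card = n + (p' - p) * ((q - 1) * (r - 1)) := by
  classical
  rcases eq_or_lt_of_le hpp' with heq | hlt
  · subst heq
    obtain ⟨E, h1, h2, h3⟩ := hn
    exact ⟨E, by rw [hM'] ; rw [hM] at h1 ; exact h1, h2, by simp [h3]⟩
  obtain ⟨E, hroots, hQI, hcard⟩ := hn
  subst hM hM'
  have hzp := Complex.isPrimitiveRoot_exp p hp.pos.ne'
  have hzq := Complex.isPrimitiveRoot_exp q hq.pos.ne'
  have hzr := Complex.isPrimitiveRoot_exp r hr.pos.ne'
  have hzp' := Complex.isPrimitiveRoot_exp p' hp'.pos.ne'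
  set ζp : ℂ := Complex.exp (2 * ↑π * I / p)
  set ζq : ℂ := Complex.exp (2 * ↑π * I / q)
  set ζr : ℂ := Complex.exp (2 * ↑π * I / r)
  set ζp' : ℂ := Complex.exp (2 * ↑π * I / p')
  have hcpq : Nat.Coprime p q := (Nat.coprime_primes hp hq).2 hpq
  have hcpr : Nat.Coprime p r := (Nat.coprime_primes hp hr).2 hpr
  have hcqr : Nat.Coprime q r := (Nat.coprime_primes hq hr).2 hqr
  have hcp'q : Nat.Coprime p' q := (Nat.coprime_primes hp' hq).2 hp'q
  have hcp'r : Nat.Coprime p' r := (Nat.coprime_primes hp' hr).2 hp'r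
  set m : ℕ × ℕ × ℕ → ℂ := fun x => ζp ^ x.1 * ζq ^ x.2.1 * ζr ^ x.2.2 with hm
  set m' : ℕ × ℕ × ℕ → ℂ := fun x => ζp' ^ x.1 * ζq ^ x.2.1 * ζr ^ x.2.2 with hm'
  set cube : Finset (ℕ × ℕ × ℕ) := (range p) ×ˢ ((range q) ×ˢ (range r)) with hcube
  set cube' : Finset (ℕ × ℕ × ℕ) := (range p') ×ˢ ((range q) ×ˢ (range r)) with hcube'
  have hinj : Set.InjOn m ↑cube := cube_injOn hp hq hr hpq hpr hqr hzp hzq hzr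
  have hinj' : Set.InjOn m' ↑cube' := cube_injOn hp' hq hr hp'q hp'r hqr hzp' hzq hzr
  set S : Finset (ℕ × ℕ × ℕ) := cube.filter (fun x => m x ∈ E) with hS
  have hSE : S.image m = E := by
    ext z
    simp only [Finset.mem_image, hS, Finset.mem_filter]
    constructor
    · rintro ⟨x, ⟨_, hxE⟩, rfl⟩; exact hxE
    · intro hz
      obtain ⟨x, hx, hxz⟩ := cube_surj hp.pos hq.pos hr.pos hzp hzq hzr hcpq hcpr hcqr
        (hroots z hz)
      exact ⟨x, ⟨hx, by rw [hm]; simpa [hxz] using hz⟩, hxz⟩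
  have hScube : S ⊆ cube := Finset.filter_subset _ _
  have hScard : S.card = n := by
    rw [← hcard, ← hSE]
    exact (Finset.card_image_of_injOn (hinj.mono (Finset.coe_subset.2 hScube))).symm
  set NB : Finset (ℕ × ℕ × ℕ) := (Finset.Ico p p') ×ˢ ((Finset.Ico 1 q) ×ˢ (Finset.Ico 1 r))
    with hNB
  have hdisj : Disjoint S NB := by
    rw [Finset.disjoint_left]
    rintro ⟨i, j, k⟩ hxS hxNB
    rw [hS, Finset.mem_filter, hcube] at hxS
    rw [hNB] at hxNB
    simp only [Finset.mem_product, Finset.mem_range, Finset.mem_Ico] at hxS hxNB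
    omega
  set S' : Finset (ℕ × ℕ × ℕ) := S ∪ NB with hS'
  have hS'cube' : S' ⊆ cube' := by
    rw [hS']
    refine Finset.union_subset (hScube.trans ?_) ?_
    · rw [hcube, hcube']
      exact Finset.product_subset_product (Finset.range_subset_range.2 hpp') le_rfl
    · rw [hNB, hcube']
      refine Finset.product_subset_product ?_ (Finset.product_subset_product ?_ ?_) <;>
        · intro x hx
          simp only [Finset.mem_Ico] at hx
          simp only [Finset.mem_range]
          omega
  have hS'card : S'.card = n + (p' - p) * ((q - 1) * (r - 1)) := by
    rw [hS', Finset.card_union_of_disjoint hdisj, hScard, hNB]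
    simp [Finset.card_product, Nat.card_Ico]
  set E' : Finset ℂ := S'.image m' with hE'
  have hE'card : E'.card = n + (p' - p) * ((q - 1) * (r - 1)) := by
    rw [hE', Finset.card_image_of_injOn (hinj'.mono (Finset.coe_subset.2 hS'cube')), hS'card]
  have hE'roots : ∀ z ∈ E', z ^ (p' * q * r) = 1 := by
    intro z hz
    rw [hE', Finset.mem_image] at hz
    obtain ⟨⟨a, b, c⟩, _, rfl⟩ := hz
    have e1 : (ζp' ^ a) ^ (p' * q * r) = 1 := by
      rw [← pow_mul, show a * (p' * q * r) = p' * (a * (q * r)) by ring, pow_mul,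
        hzp'.pow_eq_one, one_pow]
    have e2 : (ζq ^ b) ^ (p' * q * r) = 1 := by
      rw [← pow_mul, show b * (p' * q * r) = q * (b * (p' * r)) by ring, pow_mul,
        hzq.pow_eq_one, one_pow]
    have e3 : (ζr ^ c) ^ (p' * q * r) = 1 := by
      rw [← pow_mul, show c * (p' * q * r) = r * (c * (p' * q)) by ring, pow_mul,
        hzr.pow_eq_one, one_pow]
    rw [hm']
    simp only []
    rw [mul_pow, mul_pow, e1, e2, e3, one_mul, one_mul]
  refine ⟨E', hE'roots, ?_, hE'card⟩
  intro s ε hsub hvals hsum0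
  set a : ℕ → ℕ → ℕ → ℤ := fun i j k =>
    if m' (i, j, k) ∈ s ∧ (i, j, k) ∈ cube' then ε (m' (i, j, k)) else 0 with ha
  have havals : ∀ i j k, a i j k = 0 ∨ a i j k = 1 ∨ a i j k = -1 := by
    intro i j k
    simp only [ha]
    split_ifs with hc
    · exact hvals _ hc.1
    · left; rfl
  have hsupp : ∀ x : ℕ × ℕ × ℕ, x ∈ cube' → a x.1 x.2.1 x.2.2 ≠ 0 → x ∈ S' := by
    rintro ⟨i, j, k⟩ hxc hne
    simp only [ha] at hne
    split_ifs at hne with hc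
    · have hzE' : m' (i, j, k) ∈ E' := Finset.mem_coe.1 (hsub (Finset.mem_coe.2 hc.1))
      rw [hE', Finset.mem_image] at hzE'
      obtain ⟨y, hyS', hym⟩ := hzE'
      have hyx : y = (i, j, k) :=
        hinj' (Finset.mem_coe.2 (hS'cube' hyS')) (Finset.mem_coe.2 hxc) hym
      rwa [← hyx]
    · exact absurd rfl hne
  -- the big-cube sum vanishes
  have hbig : ∑ i ∈ range p', ∑ j ∈ range q, ∑ k ∈ range r,
      (a i j k : ℂ) * (ζp' ^ i * ζq ^ j * ζr ^ k) = 0 := by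
    have e0 : ∑ x ∈ cube', (a x.1 x.2.1 x.2.2 : ℂ) * m' x
        = ∑ i ∈ range p', ∑ j ∈ range q, ∑ k ∈ range r,
          (a i j k : ℂ) * (ζp' ^ i * ζq ^ j * ζr ^ k) := by
      rw [hcube', Finset.sum_product]
      refine Finset.sum_congr rfl fun i _ => ?_
      rw [Finset.sum_product]
    rw [← e0]
    have e1 : ∑ x ∈ cube', (a x.1 x.2.1 x.2.2 : ℂ) * m' x
        = ∑ x ∈ cube'.filter (fun x => m' x ∈ s), (ε (m' x) : ℂ) * m' x := by
      rw [Finset.sum_filter]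
      refine Finset.sum_congr rfl fun x hx => ?_
      rw [ha]
      by_cases hms : m' x ∈ s
      · simp only [hms, hx, and_self, if_pos, if_true]
      · simp only [hms, false_and, if_neg, not_false_iff, Int.cast_zero, zero_mul, if_false]
    have e2 : s = (cube'.filter (fun x => m' x ∈ s)).image m' := by
      ext z
      constructor
      · intro hzs
        have hzE' : z ∈ E' := Finset.mem_coe.1 (hsub (Finset.mem_coe.2 hzs))
        rw [hE', Finset.mem_image] at hzE'
        obtain ⟨y, hyS', rfl⟩ := hzE'
        exact Finset.mem_image_of_mem _ (Finset.mem_filter.2 ⟨hS'cube' hyS', hzs⟩)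
      · intro hz
        rw [Finset.mem_image] at hz
        obtain ⟨y, hy, rfl⟩ := hz
        exact (Finset.mem_filter.1 hy).2
    rw [e1]
    rw [e2, Finset.sum_image (fun x hx y hy hxy =>
      hinj' (Finset.mem_coe.2 (Finset.filter_subset _ _ hx))
        (Finset.mem_coe.2 (Finset.filter_subset _ _ hy)) hxy)] at hsum0
    exact hsum0
  have hid := vanish_structure hp' hq hr hp'q hp'r hqr hzp' hzq hzr a hbig
  have hp'1 : 1 < p' := hp'.one_lt
  have hq1 : 1 < q := hq.one_lt
  have hr1 : 1 < r := hr.one_lt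
  have hPp : p ≤ p' - 1 := by omega
  have hPlt : p' - 1 < p' := by omega
  have hQlt : q - 1 < q := by omega
  have hRlt : r - 1 < r := by omega
  -- vanishing on forbidden slabs for new rows
  have z1 : ∀ i k, p ≤ i → i < p' → k < r → a i 0 k = 0 := by
    intro i k hpi hip' hkr
    by_contra hne
    have hmem : (i, 0, k) ∈ cube' := by
      rw [hcube']
      simp only [Finset.mem_product, Finset.mem_range]
      exact ⟨hip', hq.pos, hkr⟩
    have hxS' := hsupp (i, 0, k) hmem hne
    rw [hS', Finset.mem_union] at hxS'
    rcases hxS' with hxS | hxNB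
    · have := hScube hxS
      rw [hcube] at this
      simp only [Finset.mem_product, Finset.mem_range] at this
      omega
    · rw [hNB] at hxNB
      simp only [Finset.mem_product, Finset.mem_Ico] at hxNB
      omega
  have z2 : ∀ i j, p ≤ i → i < p' → j < q → a i j 0 = 0 := by
    intro i j hpi hip' hjq
    by_contra hne
    have hmem : (i, j, 0) ∈ cube' := by
      rw [hcube']
      simp only [Finset.mem_product, Finset.mem_range]
      exact ⟨hip', hjq, hr.pos⟩
    have hxS' := hsupp (i, j, 0) hmem hne
    rw [hS', Finset.mem_union] at hxS'
    rcases hxS' with hxS | hxNB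
    · have := hScube hxS
      rw [hcube] at this
      simp only [Finset.mem_product, Finset.mem_range] at this
      omega
    · rw [hNB] at hxNB
      simp only [Finset.mem_product, Finset.mem_Ico] at hxNB
      omega
  -- rows with index ≥ p all agree with row p'-1
  have hrow : ∀ i, p ≤ i → i < p' → ∀ j < q, ∀ k < r, a i j k = a (p'-1) j k := by
    intro i hpi hip'
    have d1 := z1 i 0 hpi hip' hr.pos
    have d2 := z1 i (r-1) hpi hip' hRlt
    have d3 := z2 i (q-1) hpi hip' hQlt
    have d4 := z1 (p'-1) 0 hPp hPlt hr.pos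
    have d5 := z1 (p'-1) (r-1) hPp hPlt hRlt
    have d6 := z2 (p'-1) (q-1) hPp hPlt hQlt
    have d7 := z2 i 0 hpi hip' hq.pos
    have e00 := hid i hip' 0 hq.pos 0 hr.pos
    have c1 : a i (q-1) (r-1) = a (p'-1) (q-1) (r-1) := by omega
    have c2 : ∀ k < r, a i (q-1) k = a (p'-1) (q-1) k := by
      intro k hk
      have e0k := hid i hip' 0 hq.pos k hk
      have dz1 := z1 i k hpi hip' hk
      have dz2 := z1 (p'-1) k hPp hPlt hk
      omega
    have c3 : ∀ j < q, a i j (r-1) = a (p'-1) j (r-1) := by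
      intro j hj
      have ej0 := hid i hip' j hj 0 hr.pos
      have dz1 := z2 i j hpi hip' hj
      have dz2 := z2 (p'-1) j hPp hPlt hj
      omega
    intro j hj k hk
    have e := hid i hip' j hj k hk
    have h1 := c3 j hj
    have h2 := c2 k hk
    omega
  -- the small cube sum vanishes, hence small rows vanish by quasi-independence of E
  have hzero_small : ∀ i < p, ∀ j < q, ∀ k < r, a i j k = 0 := by
    have hgp : ∑ i ∈ range p, ζp ^ i = 0 := hzp.geom_sum_eq_zero hp.one_lt
    have hgq : ∑ j ∈ range q, ζq ^ j = 0 := hzq.geom_sum_eq_zero hq.one_lt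
    have hgr : ∑ k ∈ range r, ζr ^ k = 0 := hzr.geom_sum_eq_zero hr.one_lt
    set W : ℕ → ℕ → ℤ := fun i j => a i j (r-1) with hW
    set V : ℕ → ℕ → ℤ := fun i k => a i (q-1) k - a i (q-1) (r-1) with hV
    set U : ℕ → ℕ → ℤ := fun j k =>
      a (p'-1) j k - a (p'-1) j (r-1) - a (p'-1) (q-1) k + a (p'-1) (q-1) (r-1) with hU
    have hsmall : ∑ i ∈ range p, ∑ j ∈ range q, ∑ k ∈ range r,
        (a i j k : ℂ) * (ζp ^ i * ζq ^ j * ζr ^ k) = 0 := by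
      have edec : ∀ i ∈ range p, ∀ j ∈ range q, ∀ k ∈ range r,
          (a i j k : ℂ) * (ζp ^ i * ζq ^ j * ζr ^ k)
          = (W i j : ℂ) * (ζp ^ i * ζq ^ j * ζr ^ k)
            + ((V i k : ℂ) * (ζp ^ i * ζq ^ j * ζr ^ k)
            + (U j k : ℂ) * (ζp ^ i * ζq ^ j * ζr ^ k)) := by
        intro i hi j hj k hk
        rw [Finset.mem_range] at hi hj hk
        have hident := hid i (by omega) j hj k hk
        have hc : (a i j k : ℂ) = (W i j : ℂ) + (V i k : ℂ) + (U j k : ℂ) := by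
          rw [hW, hV, hU]
          push_cast
          exact_mod_cast congrArg (fun z : ℤ => (z : ℂ)) (by omega : a i j k
            = a i j (r-1) + (a i (q-1) k - a i (q-1) (r-1))
              + (a (p'-1) j k - a (p'-1) j (r-1) - a (p'-1) (q-1) k + a (p'-1) (q-1) (r-1)))
        rw [hc]; ring
      rw [Finset.sum_congr rfl fun i hi => Finset.sum_congr rfl fun j hj =>
        Finset.sum_congr rfl fun k hk => edec i hi j hj k hk]
      simp only [Finset.sum_add_distrib]
      have T1 : ∑ i ∈ range p, ∑ j ∈ range q, ∑ k ∈ range r,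
          (W i j : ℂ) * (ζp ^ i * ζq ^ j * ζr ^ k) = 0 := by
        refine Finset.sum_eq_zero fun i _ => Finset.sum_eq_zero fun j _ => ?_
        have : ∑ k ∈ range r, (W i j : ℂ) * (ζp ^ i * ζq ^ j * ζr ^ k)
            = ((W i j : ℂ) * (ζp ^ i * ζq ^ j)) * ∑ k ∈ range r, ζr ^ k := by
          rw [Finset.mul_sum]
          exact Finset.sum_congr rfl fun k _ => by ring
        rw [this, hgr, mul_zero]
      have T2 : ∑ i ∈ range p, ∑ j ∈ range q, ∑ k ∈ range r,
          (V i k : ℂ) * (ζp ^ i * ζq ^ j * ζr ^ k) = 0 := by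
        refine Finset.sum_eq_zero fun i _ => ?_
        rw [Finset.sum_comm]
        refine Finset.sum_eq_zero fun k _ => ?_
        have : ∑ j ∈ range q, (V i k : ℂ) * (ζp ^ i * ζq ^ j * ζr ^ k)
            = ((V i k : ℂ) * (ζp ^ i * ζr ^ k)) * ∑ j ∈ range q, ζq ^ j := by
          rw [Finset.mul_sum]
          exact Finset.sum_congr rfl fun j _ => by ring
        rw [this, hgq, mul_zero]
      have T3 : ∑ i ∈ range p, ∑ j ∈ range q, ∑ k ∈ range r,
          (U j k : ℂ) * (ζp ^ i * ζq ^ j * ζr ^ k) = 0 := by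
        have : ∀ i, ∑ j ∈ range q, ∑ k ∈ range r,
            (U j k : ℂ) * (ζp ^ i * ζq ^ j * ζr ^ k)
            = (∑ j ∈ range q, ∑ k ∈ range r, (U j k : ℂ) * (ζq ^ j * ζr ^ k)) * ζp ^ i := by
          intro i
          rw [Finset.sum_mul]
          refine Finset.sum_congr rfl fun j _ => ?_
          rw [Finset.sum_mul]
          exact Finset.sum_congr rfl fun k _ => by ring
        rw [Finset.sum_congr rfl fun i _ => this i, ← Finset.mul_sum, hgp, mul_zero]
      rw [T1, T2, T3]
      ring
    have hsum_cube : ∑ x ∈ cube, ((fun x : ℕ × ℕ × ℕ => a x.1 x.2.1 x.2.2) x : ℂ) * m x = 0 := by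
      rw [hcube, Finset.sum_product]
      have : ∀ i ∈ range p, ∑ y ∈ (range q) ×ˢ (range r), (a i y.1 y.2 : ℂ) * m (i, y.1, y.2)
          = ∑ j ∈ range q, ∑ k ∈ range r, (a i j k : ℂ) * (ζp ^ i * ζq ^ j * ζr ^ k) := by
        intro i _
        rw [Finset.sum_product]
      rw [Finset.sum_congr rfl this]
      exact hsmall
    have hsuppE : ∀ x ∈ cube, (fun x : ℕ × ℕ × ℕ => a x.1 x.2.1 x.2.2) x ≠ 0 → m x ∈ E := by
      rintro ⟨i, j, k⟩ hxc hne
      have hxc' : (i, j, k) ∈ cube' := by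
        rw [hcube] at hxc
        rw [hcube']
        simp only [Finset.mem_product, Finset.mem_range] at hxc ⊢
        omega
      have hxS' := hsupp (i, j, k) hxc' hne
      rw [hS', Finset.mem_union] at hxS'
      rcases hxS' with hxS | hxNB
      · rw [hS, Finset.mem_filter] at hxS
        exact hxS.2
      · rw [hcube] at hxc
        rw [hNB] at hxNB
        simp only [Finset.mem_product, Finset.mem_range, Finset.mem_Ico] at hxc hxNB
        omega
    have := quasi_to_array hQI cube m hinj (fun x => a x.1 x.2.1 x.2.2)
      (fun x => havals x.1 x.2.1 x.2.2) hsuppE hsum_cube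
    intro i hi j hj k hk
    refine this (i, j, k) ?_
    rw [hcube]
    simp only [Finset.mem_product, Finset.mem_range]
    exact ⟨hi, hj, hk⟩
  -- split the big sum: the new rows contribute c * Dhat
  set Dhat : ℂ := ∑ j ∈ range q, ∑ k ∈ range r, (a (p'-1) j k : ℂ) * (ζq ^ j * ζr ^ k) with hD
  set c : ℂ := ∑ i ∈ Finset.Ico p p', ζp' ^ i with hc
  have hsplit : c * Dhat = 0 := by
    have h1 : ∀ i ∈ range p, ∑ j ∈ range q, ∑ k ∈ range r,
        (a i j k : ℂ) * (ζp' ^ i * ζq ^ j * ζr ^ k) = 0 := by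
      intro i hi
      rw [Finset.mem_range] at hi
      refine Finset.sum_eq_zero fun j hj => Finset.sum_eq_zero fun k hk => ?_
      rw [Finset.mem_range] at hj hk
      rw [hzero_small i hi j hj k hk]
      simp
    have h2 : ∀ i ∈ Finset.Ico p p', ∑ j ∈ range q, ∑ k ∈ range r,
        (a i j k : ℂ) * (ζp' ^ i * ζq ^ j * ζr ^ k) = ζp' ^ i * Dhat := by
      intro i hi
      rw [Finset.mem_Ico] at hi
      rw [hD, Finset.mul_sum]
      refine Finset.sum_congr rfl fun j hj => ?_
      rw [Finset.mul_sum]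
      refine Finset.sum_congr rfl fun k hk => ?_
      rw [Finset.mem_range] at hj hk
      rw [hrow i hi.1 hi.2 j hj k hk]
      ring
    have hbig2 := hbig
    rw [Finset.range_eq_Ico, ← Finset.sum_Ico_consecutive _ (Nat.zero_le p) (le_of_lt hlt),
      ← Finset.range_eq_Ico] at hbig2
    rw [Finset.sum_congr rfl h1, Finset.sum_congr rfl h2, Finset.sum_const_zero, zero_add,
      ← Finset.sum_mul] at hbig2
    rw [hc]
    exact hbig2
  have hcne : c ≠ 0 := by
    intro hc0
    set e : ℕ → ℤ := fun i => if p ≤ i then 1 else 0 with he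
    set a1 : ℕ → ℕ → ℕ → ℤ := fun i j k => if j = 0 ∧ k = 0 then e i else 0 with ha1
    have hsum1 : ∑ i ∈ range p', ∑ j ∈ range q, ∑ k ∈ range r,
        (a1 i j k : ℂ) * (ζp' ^ i * ζq ^ j * ζr ^ k) = 0 := by
      have inner : ∀ i ∈ range p', ∑ j ∈ range q, ∑ k ∈ range r,
          (a1 i j k : ℂ) * (ζp' ^ i * ζq ^ j * ζr ^ k) = (e i : ℂ) * ζp' ^ i := by
        intro i _
        rw [Finset.sum_eq_single_of_mem 0 (Finset.mem_range.2 hq.pos)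
          (fun b _ hb => Finset.sum_eq_zero fun k _ => by simp [ha1, hb])]
        rw [Finset.sum_eq_single_of_mem 0 (Finset.mem_range.2 hr.pos)
          (fun b _ hb => by simp [ha1, hb])]
        have hv : a1 i 0 0 = e i := by simp [ha1]
        rw [hv, pow_zero, pow_zero]
        ring
      rw [Finset.sum_congr rfl inner]
      have e1 : ∑ i ∈ range p', (e i : ℂ) * ζp' ^ i = ∑ i ∈ Finset.Ico p p', ζp' ^ i := by
        rw [Finset.range_eq_Ico, ← Finset.sum_Ico_consecutive _ (Nat.zero_le p) (le_of_lt hlt)]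
        have left0 : ∑ i ∈ Finset.Ico 0 p, (e i : ℂ) * ζp' ^ i = 0 :=
          Finset.sum_eq_zero fun i hi => by
            rw [Finset.mem_Ico] at hi
            have hv : e i = 0 := by simp only [he]; rw [if_neg (by omega : ¬ p ≤ i)]
            rw [hv, Int.cast_zero, zero_mul]
        have right1 : ∑ i ∈ Finset.Ico p p', (e i : ℂ) * ζp' ^ i
            = ∑ i ∈ Finset.Ico p p', ζp' ^ i :=
          Finset.sum_congr rfl fun i hi => by
            rw [Finset.mem_Ico] at hi
            have hv : e i = 1 := by simp only [he]; rw [if_pos hi.1]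
            rw [hv, Int.cast_one, one_mul]
        rw [left0, right1, zero_add]
      rw [e1, ← hc, hc0]
    have hid1 := vanish_structure hp' hq hr hp'q hp'r hqr hzp' hzq hzr a1 hsum1
    have h00 := hid1 0 hp'.pos 0 hq.pos 0 hr.pos
    have hQ0 : q - 1 ≠ 0 := by omega
    have hR0 : r - 1 ≠ 0 := by omega
    have v1 : a1 0 0 0 = 0 := by simp [ha1, he, Nat.not_le.2 hp.pos]
    have v2 : a1 0 0 (r-1) = 0 := by simp [ha1, hR0]
    have v3 : a1 0 (q-1) 0 = 0 := by simp [ha1, hQ0]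
    have v4 : a1 (p'-1) 0 0 = 1 := by simp [ha1, he, hPp]
    have v5 : a1 0 (q-1) (r-1) = 0 := by simp [ha1, hQ0]
    have v6 : a1 (p'-1) 0 (r-1) = 0 := by simp [ha1, hR0]
    have v7 : a1 (p'-1) (q-1) 0 = 0 := by simp [ha1, hQ0]
    have v8 : a1 (p'-1) (q-1) (r-1) = 0 := by simp [ha1, hQ0]
    omega
  have hD0 : Dhat = 0 := by
    rcases mul_eq_zero.1 hsplit with h | h
    · exact absurd h hcne
    · exact h
  have h2d : ∀ j < q, ∀ k < r, a (p'-1) j k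
      = a (p'-1) j (r-1) + a (p'-1) (q-1) k - a (p'-1) (q-1) (r-1) := by
    set a2 : ℕ → ℕ → ℕ → ℤ := fun i j k => if i = 0 then a (p'-1) j k else 0 with ha2
    have hsum2 : ∑ i ∈ range p', ∑ j ∈ range q, ∑ k ∈ range r,
        (a2 i j k : ℂ) * (ζp' ^ i * ζq ^ j * ζr ^ k) = 0 := by
      rw [Finset.sum_eq_single_of_mem 0 (Finset.mem_range.2 hp'.pos)
        (fun b _ hb => Finset.sum_eq_zero fun j _ => Finset.sum_eq_zero fun k _ => by
          simp only [ha2]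
          rw [if_neg hb]
          simp)]
      have : ∀ j ∈ range q, ∀ k ∈ range r,
          (a2 0 j k : ℂ) * (ζp' ^ 0 * ζq ^ j * ζr ^ k)
          = (a (p'-1) j k : ℂ) * (ζq ^ j * ζr ^ k) := by
        intro j _ k _
        simp only [ha2, if_pos rfl]
        rw [pow_zero]
        ring
      rw [Finset.sum_congr rfl fun j hj => Finset.sum_congr rfl fun k hk => this j hj k hk]
      rw [← hD]
      exact hD0
    have hid2 := vanish_structure hp' hq hr hp'q hp'r hqr hzp' hzq hzr a2 hsum2
    intro j hj k hk
    have e := hid2 0 hp'.pos j hj k hk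
    have hP0 : p' - 1 ≠ 0 := by omega
    have w1 : ∀ j k, a2 0 j k = a (p'-1) j k := fun j k => by simp [ha2]
    have w2 : ∀ j k, a2 (p'-1) j k = 0 := fun j k => by simp [ha2, hP0]
    simp only [w1, w2] at e
    omega
  have hProw : ∀ j < q, ∀ k < r, a (p'-1) j k = 0 := by
    have u1 := z1 (p'-1) 0 hPp hPlt hr.pos
    have u2 := z1 (p'-1) (r-1) hPp hPlt hRlt
    have u3 := z2 (p'-1) (q-1) hPp hPlt hQlt
    have t0 : a (p'-1) (q-1) (r-1) = 0 := by
      have e := h2d 0 hq.pos 0 hr.pos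
      have u4 := z2 (p'-1) 0 hPp hPlt hq.pos
      omega
    intro j hj k hk
    have e := h2d j hj k hk
    have e2 := h2d j hj 0 hr.pos
    have e3 := h2d 0 hq.pos k hk
    have u5 := z2 (p'-1) j hPp hPlt hj
    have u6 := z1 (p'-1) k hPp hPlt hk
    omega
  intro z hzs
  have hzE' : z ∈ E' := Finset.mem_coe.1 (hsub (Finset.mem_coe.2 hzs))
  rw [hE', Finset.mem_image] at hzE'
  obtain ⟨⟨i, j, k⟩, hyS', rfl⟩ := hzE'
  have hyc : (i, j, k) ∈ cube' := hS'cube' hyS'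
  have hbounds : i < p' ∧ j < q ∧ k < r := by
    rw [hcube'] at hyc
    simpa [Finset.mem_product] using hyc
  have hA0 : a i j k = 0 := by
    rcases lt_or_ge i p with hip | hpi
    · exact hzero_small i hip j hbounds.2.1 k hbounds.2.2
    · rw [hrow i hpi hbounds.1 j hbounds.2.1 k hbounds.2.2]
      exact hProw j hbounds.2.1 k hbounds.2.2
  have hAe : a i j k = ε (m' (i, j, k)) := by
    simp only [ha]
    rw [if_pos ⟨hzs, hyc⟩]
  rw [← hAe]
  exact hA0


end Step

theorem stmt_19 (p q r : ℕ) (hp : p.Prime) (hq : q.Prime) (hr : r.Prime)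
    (hp2 : p ≠ 2) (hq2 : q ≠ 2) (hr2 : r ≠ 2)
    (hpq : p < q) (hqr : q < r)
    (hbase : Psi 105 = Nat.totient 105 + 4) :
    Nat.totient (p * q * r) + 4 ≤ Psi (p * q * r) := by
  have hp3 : 3 ≤ p := by have := hp.two_le; omega
  have hq4 : q ≠ 4 := fun h => by rw [h] at hq; norm_num at hq
  have hq5 : 5 ≤ q := by have := hq.two_le; omega
  have hr6 : r ≠ 6 := fun h => by rw [h] at hr; norm_num at hr
  have hr7 : 7 ≤ r := by have := hr.two_le; omega
  have h3 : Nat.Prime 3 := by norm_num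
  have h5 : Nat.Prime 5 := by norm_num
  have h7 : Nat.Prime 7 := by norm_num
  -- base configuration of size 52 = φ(105) + 4
  have hbase' : ∃ E : Finset ℂ, (∀ z ∈ E, z ^ 105 = 1) ∧ QuasiIndep ↑E ∧
      E.card = Nat.totient 105 + 4 := by
    rw [← hbase]
    exact psi_attained (by norm_num)
  have htot105 : Nat.totient 105 = 48 := by
    rw [show (105:ℕ) = 7 * 3 * 5 by norm_num,
      tot3 h7 h3 h5 (by norm_num) (by norm_num) (by norm_num)]
  rw [htot105] at hbase'
  -- step 1 : 7 → r
  have hstep1 := step_lemma h7 h3 h5 hr (by norm_num) (by norm_num) (by norm_num)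
    (by omega) (by omega) hr7 (by norm_num) rfl hbase'
  -- step 2 : 5 → q
  have hstep2 := step_lemma h5 h3 hr hq (by norm_num) (by omega) (by omega)
    (by omega) (by omega : q ≠ r) hq5 (by ring) rfl hstep1
  -- step 3 : 3 → p
  have hstep3 := step_lemma h3 hq hr hp (by omega) (by omega) (by omega : q ≠ r)
    (by omega) (by omega) hp3 (by ring) rfl hstep2
  obtain ⟨E3, hroots3, hQI3, hcard3⟩ := hstep3
  have harith : 48 + 4 + (r - 7) * ((3 - 1) * (5 - 1)) + (q - 5) * ((3 - 1) * (r - 1))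
      + (p - 3) * ((q - 1) * (r - 1)) = Nat.totient (p * q * r) + 4 := by
    rw [tot3 hp hq hr (by omega) (by omega) (by omega)]
    zify [hp3, hq5, hr7, show 1 ≤ p by omega, show 1 ≤ q by omega, show 1 ≤ r by omega]
    ring
  refine psi_ge (Nat.mul_pos (Nat.mul_pos hp.pos hq.pos) hr.pos) ⟨E3, ?_, hQI3, ?_⟩
  · exact fun z hz => by rw [show p * q * r = p * q * r from rfl]; exact hroots3 z hz
  · rw [hcard3, ← harith]
end
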